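/- arXiv:2306.09058 — 4 statements merged into one kernel-verified Lean document; each statement's English description precedes it below -/
import Mathlib

section
/- In every graph G, for vertex sets A and B, either there are k pairwise vertex-disjoint A–B paths, or there exists a set X of at most k−1 vertices such that G − X contains no A–B path. -/
/-!
Göring's proof, by induction on the number of edges. Pick an edge `xy`. If every `A`–`B`
separator of `G - xy` still has `k` vertices, induction gives the paths. Otherwise `G - xy` has
a separator `S` with `|S| < k`, which does not separate in `G`; so exactly one end of `xy`, say
`y`, is reachable from `A` in `G - xy - S`, and `x` is reachable from `B`. Then every
`A`–`(S ∪ {y})` separator and every `(S ∪ {x})`–`B` separator of `G - xy` separates `A` from `B`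
in `G`, so by induction `G - xy` has `k` disjoint paths from `A` to `S ∪ {y}` and `k` disjoint
paths from `S ∪ {x}` to `B`. The first family lives on the `A`-side of `S` and the second on the
`B`-side, so two of these paths can only meet in a common end in `S`; joining the families at `S`
and along the edge `yx` gives `k` disjoint `A`–`B` paths of `G`.
-/

/-- An `A`–`B` path in `G`: a path whose first vertex is in `A`, whose last vertex
is in `B`, and no internal vertex lies in `A ∪ B`. -/
structure ABPath {V : Type} (G : SimpleGraph V) (A B : Set V) where
  a : V
  b : V
  walk : G.Walk a b
  isPath : walk.IsPath
  ha : a ∈ A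
  hb : b ∈ B
  internal : ∀ v ∈ walk.support, v ≠ a → v ≠ b → v ∉ A ∧ v ∉ B

namespace SimpleGraph

variable {V : Type} {G H : SimpleGraph V} {A B X : Set V} {u v x y : V}

theorem deleteEdges_adj_or {e : Sym2 V} (h : G.Adj u v) :
    (G.deleteEdges {e}).Adj u v ∨ s(u, v) = e := by
  by_cases he : s(u, v) = e
  · exact Or.inr he
  · exact Or.inl (by simp [h, he])

theorem deleteEdges_lt_of_mem {e : Sym2 V} (he : e ∈ G.edgeSet) : G.deleteEdges {e} < G := by
  refine (G.deleteEdges_le _).lt_of_ne fun h => ?_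
  rw [← h, edgeSet_deleteEdges] at he
  exact he.2 rfl

theorem Walk.exists_of_eq_or_adj (h : u = v ∨ G.Adj u v) :
    ∃ w : G.Walk u v, ∀ t ∈ w.support, t = u ∨ t = v := by
  rcases h with rfl | h
  · exact ⟨.nil, by simp⟩
  · exact ⟨.cons h .nil, by simp⟩

def Separates (G : SimpleGraph V) (A B X : Set V) : Prop :=
  ∀ ⦃a b : V⦄ (w : G.Walk a b), a ∈ A → b ∈ B → ∃ v ∈ w.support, v ∈ X

theorem Separates.symm (h : G.Separates A B X) : G.Separates B A X := fun _ _ w hb ha => by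
  simpa using h w.reverse ha hb

def reachAvoiding (G : SimpleGraph V) (A X : Set V) : Set V :=
  {v | ∃ a ∈ A, ∃ w : G.Walk a v, ∀ u ∈ w.support, u ∉ X}

theorem notMem_of_mem_reachAvoiding (h : v ∈ G.reachAvoiding A X) : v ∉ X := by
  obtain ⟨_, -, w, hw⟩ := h
  exact hw v w.end_mem_support

theorem subset_reachAvoiding_union : A ⊆ G.reachAvoiding A X ∪ X := fun a ha => by
  by_cases haX : a ∈ X
  · exact Or.inr haX
  · exact Or.inl ⟨a, ha, .nil, by simpa using haX⟩

theorem mem_reachAvoiding_of_adj (hu : u ∈ G.reachAvoiding A X) (huv : G.Adj u v) (hv : v ∉ X) :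
    v ∈ G.reachAvoiding A X := by
  obtain ⟨a, ha, w, hw⟩ := hu
  refine ⟨a, ha, w.concat huv, fun t ht => ?_⟩
  rw [Walk.support_concat, List.mem_append, List.mem_singleton] at ht
  rcases ht with ht | rfl
  exacts [hw t ht, hv]

theorem Separates.disjoint_reachAvoiding (h : G.Separates A B X) :
    Disjoint (G.reachAvoiding A X) (G.reachAvoiding B X) := by
  rw [Set.disjoint_left]
  rintro v ⟨a, ha, w, hw⟩ ⟨b, hb, w', hw'⟩
  obtain ⟨t, ht, htX⟩ := h (w.append w'.reverse) ha hb
  rw [Walk.mem_support_append_iff, Walk.support_reverse, List.mem_reverse] at ht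
  rcases ht with ht | ht
  exacts [hw t ht htX, hw' t ht htX]

theorem Separates.notMem_right_of_mem_reachAvoiding (h : G.Separates A B X)
    (hv : v ∈ G.reachAvoiding A X) : v ∉ B := fun hvB =>
  Set.disjoint_left.1 h.disjoint_reachAvoiding hv
    ((subset_reachAvoiding_union hvB).resolve_right (notMem_of_mem_reachAvoiding hv))

theorem Walk.exists_walk_subset_of_closed {R Z : Set V}
    (hR : ∀ u ∈ R, u ∉ Z → u ∉ B ∧ ∀ c, G.Adj u c → H.Adj u c ∧ c ∈ R) :
    ∀ {u b : V} (W : G.Walk u b), u ∈ R → b ∈ B →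
      ∃ z ∈ Z, ∃ W' : H.Walk u z, ∀ t ∈ W'.support, t ∈ W.support
  | u, _, W, hu, hb => by
    by_cases huZ : u ∈ Z
    · exact ⟨u, huZ, .nil, by simp⟩
    cases W with
    | nil => exact absurd hb (hR u hu huZ).1
    | cons h W =>
      obtain ⟨hH, hc⟩ := (hR u hu huZ).2 _ h
      obtain ⟨z, hz, W', hW'⟩ := exists_walk_subset_of_closed hR W hc hb
      exact ⟨z, hz, .cons hH W', by simpa using fun t ht => Or.inr (hW' t ht)⟩

theorem Separates.of_closed {R Z T : Set V}
    (hR : ∀ u ∈ R, u ∉ Z → u ∉ B ∧ ∀ c, G.Adj u c → H.Adj u c ∧ c ∈ R)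
    (hAR : A ⊆ R) (hT : H.Separates A Z T) : G.Separates A B T := by
  intro a b W ha hb
  obtain ⟨z, hz, W', hW'⟩ := Walk.exists_walk_subset_of_closed hR W (hAR ha) hb
  obtain ⟨t, ht, htT⟩ := hT W' ha hz
  exact ⟨t, hW' t ht, htT⟩

theorem mem_reachAvoiding_iff_notMem {S : Set V}
    (hS : (G.deleteEdges {s(x, y)}).Separates A B S) (hG : ¬ G.Separates A B S) :
    x ∈ (G.deleteEdges {s(x, y)}).reachAvoiding A S ↔
      y ∉ (G.deleteEdges {s(x, y)}).reachAvoiding A S := by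
  set R := (G.deleteEdges {s(x, y)}).reachAvoiding A S
  by_contra hxy
  have hiff : x ∈ R ↔ y ∈ R := by tauto
  refine hG (Separates.of_closed (H := G) (R := R ∪ S) (Z := S) ?_ subset_reachAvoiding_union
    fun _ b _ _ hb => ⟨b, Walk.end_mem_support _, hb⟩)
  rintro u (hu | hu) huS
  · refine ⟨hS.notMem_right_of_mem_reachAvoiding hu, fun c hc => ⟨hc, ?_⟩⟩
    by_cases hcS : c ∈ S
    · exact Or.inr hcS
    refine Or.inl ?_
    rcases deleteEdges_adj_or hc with hc | he
    · exact mem_reachAvoiding_of_adj hu hc hcS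
    · rcases Sym2.eq_iff.1 he with ⟨rfl, rfl⟩ | ⟨rfl, rfl⟩
      exacts [hiff.1 hu, hiff.2 hu]
  · exact absurd hu huS

theorem Separates.of_separates_insert {e : Sym2 V} {S T : Set V}
    (hS : (G.deleteEdges {e}).Separates A B S)
    (he : ∀ u ∈ e, u ∈ (G.deleteEdges {e}).reachAvoiding A S → u = y)
    (hT : (G.deleteEdges {e}).Separates A (insert y S) T) : G.Separates A B T := by
  refine Separates.of_closed (R := (G.deleteEdges {e}).reachAvoiding A S ∪ S) ?_
    subset_reachAvoiding_union hT
  rintro u (hu | hu) huZ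
  · have huy : u ≠ y := fun h => huZ (Or.inl h)
    refine ⟨hS.notMem_right_of_mem_reachAvoiding hu, fun c hc => ?_⟩
    rcases deleteEdges_adj_or hc with hc | hce
    · by_cases hcS : c ∈ S
      exacts [⟨hc, Or.inr hcS⟩, ⟨hc, Or.inl (mem_reachAvoiding_of_adj hu hc hcS)⟩]
    · exact absurd (he u (hce ▸ Sym2.mem_mk_left u c) hu) huy
  · exact absurd (Or.inr hu) huZ

end SimpleGraph

open SimpleGraph

namespace ABPath

variable {V : Type} {G G' : SimpleGraph V} {A B S Z : Set V}

/-- Diestel's `A`–`B` paths: `V(P) ∩ A = {a}` and `V(P) ∩ B = {b}`. An `ABPath` may also meet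
`B` in its first vertex or `A` in its last one. -/
def IsTight (p : ABPath G A B) : Prop :=
  ∀ v ∈ p.walk.support, (v ∈ A → v = p.a) ∧ (v ∈ B → v = p.b)

def reverse (p : ABPath G A B) : ABPath G B A where
  a := p.b
  b := p.a
  walk := p.walk.reverse
  isPath := p.isPath.reverse
  ha := p.hb
  hb := p.ha
  internal v hv hb ha := (p.internal v (by simpa using hv) ha hb).symm

theorem IsTight.reverse {p : ABPath G A B} (hp : p.IsTight) : p.reverse.IsTight :=
  fun v hv => (hp v (by simpa [ABPath.reverse] using hv)).symm

def mapLe (h : G ≤ G') (p : ABPath G A B) : ABPath G' A B where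
  a := p.a
  b := p.b
  walk := p.walk.mapLe h
  isPath := p.isPath.mapLe h
  ha := p.ha
  hb := p.hb
  internal v hv := p.internal v (by simpa using hv)

theorem IsTight.mapLe {p : ABPath G A B} (hp : p.IsTight) (h : G ≤ G') : (p.mapLe h).IsTight :=
  fun v hv => hp v (by simpa [ABPath.mapLe] using hv)

theorem exists_isTight_of_isPath {a b : V} (W : G.Walk a b) (hW : W.IsPath) (ha : a ∈ A)
    (hb : b ∈ B) : ∃ p : ABPath G A B, p.IsTight ∧ ∀ v ∈ p.walk.support, v ∈ W.support := by
  classical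
  induction h : W.length using Nat.strong_induction_on generalizing a b with
  | _ n ih =>
  by_cases hA : ∃ v ∈ W.support, v ∈ A ∧ v ≠ a
  · obtain ⟨v, hv, hvA, hva⟩ := hA
    obtain ⟨p, hp, hsub⟩ := ih _ (h ▸ Walk.length_dropUntil_lt_length hv hva)
      (W.dropUntil v hv) (hW.dropUntil hv) hvA hb rfl
    exact ⟨p, hp, fun t ht => W.support_dropUntil_subset_support hv (hsub t ht)⟩
  by_cases hB : ∃ v ∈ W.support, v ∈ B ∧ v ≠ b
  · obtain ⟨v, hv, hvB, hvb⟩ := hB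
    obtain ⟨p, hp, hsub⟩ := ih _ (h ▸ Walk.length_takeUntil_lt_length hv hvb)
      (W.takeUntil v hv) (hW.takeUntil hv) ha hvB rfl
    exact ⟨p, hp, fun t ht => W.support_takeUntil_subset_support hv (hsub t ht)⟩
  push Not at hA hB
  exact ⟨⟨a, b, W, hW, ha, hb, fun v hv hva hvb => ⟨mt (hA v hv) hva, mt (hB v hv) hvb⟩⟩,
    fun v hv => ⟨hA v hv, hB v hv⟩, fun _ => id⟩

theorem exists_isTight {a b : V} (W : G.Walk a b) (ha : a ∈ A) (hb : b ∈ B) :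
    ∃ p : ABPath G A B, p.IsTight ∧ ∀ v ∈ p.walk.support, v ∈ W.support := by
  classical
  obtain ⟨p, hp, hsub⟩ := exists_isTight_of_isPath W.bypass W.bypass_isPath ha hb
  exact ⟨p, hp, fun v hv => W.support_bypass_subset_support (hsub v hv)⟩

theorem IsTight.mem_reachAvoiding {p : ABPath G A Z} (hp : p.IsTight) (hSZ : S ⊆ Z) {v : V}
    (hv : v ∈ p.walk.support) (hvb : v ≠ p.b) : v ∈ G.reachAvoiding A S := by
  classical
  refine ⟨p.a, p.ha, p.walk.takeUntil v hv, fun u hu huS => ?_⟩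
  have hub : u = p.b := (hp u (p.walk.support_takeUntil_subset_support hv hu)).2 (hSZ huS)
  exact Walk.endpoint_notMem_support_takeUntil p.isPath hv (Ne.symm hvb) (hub ▸ hu)

end ABPath

structure Linkage {V : Type} (G : SimpleGraph V) (A B : Set V) (k : ℕ) where
  path : Fin k → ABPath G A B
  isTight : ∀ i, (path i).IsTight
  disjoint : Pairwise fun i j => (path i).walk.support.Disjoint (path j).walk.support

namespace Linkage

variable {V : Type} {G G' H : SimpleGraph V} {A B Z Z' : Set V} {k : ℕ}

def reverse (L : Linkage G A B k) : Linkage G B A k where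
  path i := (L.path i).reverse
  isTight i := (L.isTight i).reverse
  disjoint i j hij v hi hj := L.disjoint hij (by simpa [ABPath.reverse] using hi)
    (by simpa [ABPath.reverse] using hj)

def mapLe (h : G ≤ G') (L : Linkage G A B k) : Linkage G' A B k where
  path i := (L.path i).mapLe h
  isTight i := (L.isTight i).mapLe h
  disjoint i j hij v hi hj := L.disjoint hij (by simpa [ABPath.mapLe] using hi)
    (by simpa [ABPath.mapLe] using hj)

theorem nonempty_of_walks (U : Fin k → Set V) (hU : Pairwise fun i j => Disjoint (U i) (U j))
    (hW : ∀ i, ∃ a ∈ A, ∃ b ∈ B, ∃ W : G.Walk a b, ∀ v ∈ W.support, v ∈ U i) :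
    Nonempty (Linkage G A B k) := by
  choose a ha b hb W hWU using hW
  choose P hP hPW using fun i => ABPath.exists_isTight (W i) (ha i) (hb i)
  exact ⟨⟨P, hP, fun i j hij v hi hj =>
    Set.disjoint_left.1 (hU hij) (hWU i v (hPW i v hi)) (hWU j v (hPW j v hj))⟩⟩

theorem b_injective (L : Linkage G A B k) : Function.Injective fun i => (L.path i).b := by
  intro i j (hij : (L.path i).b = (L.path j).b)
  by_contra hne
  exact L.disjoint hne (L.path i).walk.end_mem_support
    (by rw [hij]; exact (L.path j).walk.end_mem_support)

theorem exists_b_eq [Finite V] (L : Linkage G A Z k) (hZ : Z.ncard ≤ k) {z : V} (hz : z ∈ Z) :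
    ∃ i, (L.path i).b = z := by
  obtain ⟨i, -, hi⟩ := Set.surj_on_of_inj_on_of_ncard_le (s := Set.univ)
    (fun i _ => (L.path i).b) (fun i _ => (L.path i).hb) (fun i j _ _ h => L.b_injective h)
    (by simpa using hZ) (Set.toFinite Z) z hz
  exact ⟨i, hi.symm⟩

theorem nonempty_of_join (hle : H ≤ G) (LA : Linkage H A Z k) (LB : Linkage H Z' B k)
    {σ : Fin k → Fin k} (hσ : Function.Injective σ)
    (hlink : ∀ i, (LA.path i).b = (LB.path (σ i)).a ∨ G.Adj (LA.path i).b (LB.path (σ i)).a)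
    (hcross : ∀ i i' v, v ∈ (LA.path i).walk.support → v ∈ (LB.path (σ i')).walk.support →
      i = i') :
    Nonempty (Linkage G A B k) := by
  refine nonempty_of_walks
    (fun i => {v | v ∈ (LA.path i).walk.support ∨ v ∈ (LB.path (σ i)).walk.support})
    (fun i i' hii' => Set.disjoint_left.2 ?_) fun i => ?_
  · rintro v (h | h) (h' | h')
    · exact LA.disjoint hii' h h'
    · exact hii' (hcross i i' v h h')
    · exact hii' (hcross i' i v h' h).symm
    · exact LB.disjoint (hσ.ne hii') h h'
  · obtain ⟨w, hw⟩ := Walk.exists_of_eq_or_adj (hlink i)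
    refine ⟨_, (LA.path i).ha, _, (LB.path (σ i)).hb,
      ((LA.path i).walk.mapLe hle).append (w.append ((LB.path (σ i)).walk.mapLe hle)),
      fun t ht => ?_⟩
    simp only [Walk.mem_support_append_iff, Walk.support_mapLe_eq_support] at ht
    rcases ht with ht | ht | ht
    · exact Or.inl ht
    · rcases hw t ht with rfl | rfl
      exacts [Or.inl (Walk.end_mem_support _), Or.inr (Walk.start_mem_support _)]
    · exact Or.inr ht

end Linkage

theorem Equiv.swap_apply_of_mem_insert {α : Type*} [DecidableEq α] {x y v : α} {S : Set α}
    (hxS : x ∉ S) (hyS : y ∉ S) (hv : v ∈ insert y S) :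
    (v = y ∧ Equiv.swap x y v = x) ∨ (v ∈ S ∧ Equiv.swap x y v = v) := by
  rcases hv with rfl | hv
  · exact Or.inl ⟨rfl, Equiv.swap_apply_right x v⟩
  · exact Or.inr ⟨hv, Equiv.swap_apply_of_ne_of_ne (ne_of_mem_of_not_mem hv hxS)
      (ne_of_mem_of_not_mem hv hyS)⟩

section Split

variable {V : Type} {G H : SimpleGraph V} {A B S : Set V} {k : ℕ} {x y : V}

theorem ABPath.IsTight.eq_b_and_eq_a_of_mem (hS : H.Separates A B S)
    (hy : y ∈ H.reachAvoiding A S) (hx : x ∈ H.reachAvoiding B S)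
    {p : ABPath H A (insert y S)} {q : ABPath H (insert x S) B} (hp : p.IsTight) (hq : q.IsTight)
    {v : V} (hvp : v ∈ p.walk.support) (hvq : v ∈ q.walk.support) : v = p.b ∧ v = q.a := by
  have hdisj := Set.disjoint_left.1 hS.disjoint_reachAvoiding
  have hA : v ≠ p.b → v ∈ H.reachAvoiding A S := hp.mem_reachAvoiding (Set.subset_insert y S) hvp
  have hB : v ≠ q.a → v ∈ H.reachAvoiding B S :=
    hq.reverse.mem_reachAvoiding (Set.subset_insert x S) (by simpa [ABPath.reverse] using hvq)
  have hpb : p.b ∉ H.reachAvoiding B S := by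
    rcases p.hb with h | h
    · rw [h]; exact hdisj hy
    · exact fun h' => notMem_of_mem_reachAvoiding h' h
  have hqa : q.a ∉ H.reachAvoiding A S := by
    rcases q.ha with h | h
    · rw [h]; exact fun h' => hdisj h' hx
    · exact fun h' => notMem_of_mem_reachAvoiding h' h
  constructor
  · by_contra hb
    have ha : v ≠ q.a := by rintro rfl; exact hqa (hA hb)
    exact hdisj (hA hb) (hB ha)
  · by_contra ha
    have hb : v ≠ p.b := by rintro rfl; exact hpb (hB ha)
    exact hdisj (hA hb) (hB ha)

theorem Linkage.nonempty_of_split [Finite V] (hxy : G.Adj x y)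
    (hS : (G.deleteEdges {s(x, y)}).Separates A B S)
    (hy : y ∈ (G.deleteEdges {s(x, y)}).reachAvoiding A S)
    (hx : x ∈ (G.deleteEdges {s(x, y)}).reachAvoiding B S) (hk : S.ncard < k)
    (LA : Linkage (G.deleteEdges {s(x, y)}) A (insert y S) k)
    (LB : Linkage (G.deleteEdges {s(x, y)}) (insert x S) B k) : Nonempty (Linkage G A B k) := by
  classical
  have hswap := fun i => Equiv.swap_apply_of_mem_insert (notMem_of_mem_reachAvoiding hx)
    (notMem_of_mem_reachAvoiding hy) (LA.path i).hb
  -- `Equiv.swap x y` matches ends of `LA` with starts of `LB`: a path ending at `y` continues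
  -- along the edge `yx`, one ending at `s ∈ S` continues at `s` itself.
  obtain ⟨σ, hσ⟩ : ∃ σ : Fin k → Fin k, ∀ i, (LB.path (σ i)).a = Equiv.swap x y (LA.path i).b := by
    choose σ hσ using fun i => LB.reverse.exists_b_eq ((Set.ncard_insert_le x S).trans hk)
      (z := Equiv.swap x y (LA.path i).b) (by
        rcases hswap i with ⟨-, h⟩ | ⟨h', h⟩ <;> rw [h]
        exacts [Set.mem_insert x S, Set.mem_insert_of_mem x h'])
    exact ⟨σ, hσ⟩
  refine nonempty_of_join (G.deleteEdges_le _) LA LB (σ := σ)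
    (fun i i' h => LA.b_injective ((Equiv.swap x y).injective (by rw [← hσ i, ← hσ i', h])))
    (fun i => ?_) fun i i' v hi hi' => ?_
  · rw [hσ i]
    rcases hswap i with ⟨h, h'⟩ | ⟨-, h'⟩
    · exact Or.inr (by rw [h', h]; exact hxy.symm)
    · exact Or.inl h'.symm
  · obtain ⟨hb, ha⟩ := (LA.isTight i).eq_b_and_eq_a_of_mem hS hy hx (LB.isTight _) hi hi'
    rw [hσ i'] at ha
    rcases hswap i' with ⟨-, h⟩ | ⟨-, h⟩
    · have hb' := (LA.path i).hb
      rw [← hb, ha, h] at hb'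
      exact absurd (hb'.resolve_left hxy.ne) (notMem_of_mem_reachAvoiding hx)
    · exact LA.b_injective (hb.symm.trans (ha.trans h))

end Split

namespace Linkage

variable {V : Type} [Finite V] {G : SimpleGraph V} {A B : Set V} {k : ℕ}

theorem nonempty_of_edgeSet_eq_empty (hE : G.edgeSet = ∅)
    (hG : ∀ X : Finset V, G.Separates A B X → k ≤ X.card) : Nonempty (Linkage G A B k) := by
  set T := (Set.toFinite (A ∩ B)).toFinset
  have hT : G.Separates A B T := by
    intro a b w ha hb
    cases w with
    | nil => exact ⟨a, by simp, by simpa [T] using ⟨ha, hb⟩⟩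
    | cons h _ => exact absurd (G.mem_edgeSet.2 h) (hE ▸ Set.notMem_empty _)
  let f : Fin k ↪ T := (Fin.castLEEmb (hG T hT)).trans T.equivFin.symm.toEmbedding
  refine nonempty_of_walks (fun i => {(f i : V)}) (fun i j hij => ?_) fun i => ?_
  · simpa using fun h => hij (f.injective (Subtype.ext h))
  · have hfi := (Set.Finite.mem_toFinset _).1 (f i).2
    exact ⟨f i, hfi.1, f i, hfi.2, .nil, by simp⟩

theorem nonempty_of_adj {x y : V} (hxy : G.Adj x y)
    (hG : ∀ X : Finset V, G.Separates A B X → k ≤ X.card)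
    (ih : ∀ A' B' : Set V,
      (∀ X : Finset V, (G.deleteEdges {s(x, y)}).Separates A' B' X → k ≤ X.card) →
        Nonempty (Linkage (G.deleteEdges {s(x, y)}) A' B' k)) :
    Nonempty (Linkage G A B k) := by
  by_cases hH : ∀ X : Finset V, (G.deleteEdges {s(x, y)}).Separates A B X → k ≤ X.card
  · exact (ih A B hH).map (mapLe (G.deleteEdges_le _))
  push Not at hH
  obtain ⟨S, hS, hSk⟩ := hH
  have hGS : ¬ G.Separates A B S := fun h => (hG S h).not_gt hSk
  wlog hy : y ∈ (G.deleteEdges {s(x, y)}).reachAvoiding A S generalizing x y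
  · have hx := (mem_reachAvoiding_iff_notMem hS hGS).2 hy
    rw [Sym2.eq_swap] at ih hS hx
    exact this hxy.symm ih hS hx
  have hx : x ∉ (G.deleteEdges {s(x, y)}).reachAvoiding A S :=
    fun hx => (mem_reachAvoiding_iff_notMem hS hGS).1 hx hy
  have hyB : y ∉ (G.deleteEdges {s(x, y)}).reachAvoiding B S :=
    Set.disjoint_left.1 hS.disjoint_reachAvoiding hy
  have hxB := (mem_reachAvoiding_iff_notMem hS.symm (hGS ∘ Separates.symm)).2 hyB
  obtain ⟨LA⟩ := ih A (insert y S) fun X hX => hG X <| hS.of_separates_insert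
    (fun u hu hR => (Sym2.mem_iff.1 hu).resolve_left (by rintro rfl; exact hx hR)) hX
  obtain ⟨LB⟩ := ih (insert x S) B fun X hX => hG X <| Separates.symm <|
    hS.symm.of_separates_insert
      (fun u hu hR => (Sym2.mem_iff.1 hu).resolve_right (by rintro rfl; exact hyB hR)) hX.symm
  exact nonempty_of_split hxy hS hy hxB (by simpa using hSk) LA LB

theorem nonempty_of_le_card (G : SimpleGraph V) (A B : Set V) (k : ℕ)
    (hG : ∀ X : Finset V, G.Separates A B X → k ≤ X.card) : Nonempty (Linkage G A B k) := by
  induction G using WellFoundedLT.induction generalizing A B with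
  | _ G ih =>
  rcases G.edgeSet.eq_empty_or_nonempty with hE | ⟨e, he⟩
  · exact nonempty_of_edgeSet_eq_empty hE hG
  induction e using Sym2.ind with
  | _ x y => exact nonempty_of_adj he hG fun A' B' => ih _ (deleteEdges_lt_of_mem he) A' B'

end Linkage

theorem menger_vertex_general {V : Type} [Fintype V]
    (G : SimpleGraph V) (A B : Set V) (k : ℕ) :
    (∃ P : Fin k → ABPath G A B,
      ∀ i j, i ≠ j → ∀ x, x ∈ (P i).walk.support → x ∉ (P j).walk.support)
    ∨ (∃ X : Finset V, X.card ≤ k - 1 ∧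
        ∀ p : ABPath G A B, ∃ v ∈ p.walk.support, v ∈ X) := by
  by_cases h : ∃ X : Finset V, X.card ≤ k - 1 ∧ ∀ p : ABPath G A B, ∃ v ∈ p.walk.support, v ∈ X
  · exact Or.inr h
  push Not at h
  have hG : ∀ X : Finset V, G.Separates A B X → k ≤ X.card := fun X hX => by
    by_contra hlt
    obtain ⟨p, hp⟩ := h X (by omega)
    obtain ⟨v, hv, hvX⟩ := hX p.walk p.ha p.hb
    exact hp v hv hvX
  obtain ⟨L⟩ := Linkage.nonempty_of_le_card G A B k hG
  exact Or.inl ⟨L.path, fun i j hij _ hi hj => L.disjoint hij hi hj⟩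

/-- Menger's theorem, vertex version: either there are `k` pairwise vertex-disjoint
`A`–`B` paths, or at most `k-1` vertices meet every `A`–`B` path. -/
theorem menger_vertex {V : Type} [Fintype V] [DecidableEq V]
    (G : SimpleGraph V) (A B : Set V) (k : ℕ) :
    (∃ P : Fin k → ABPath G A B,
      ∀ i j, i ≠ j → ∀ x, x ∈ (P i).walk.support → x ∉ (P j).walk.support)
    ∨ (∃ X : Finset V, X.card ≤ k - 1 ∧
        ∀ p : ABPath G A B, ∃ v ∈ p.walk.support, v ∈ X) :=
  menger_vertex_general G A B k
end

section
/- In every graph G, for vertex sets A and B, either there are k pairwise edge-disjoint A–B paths, or there exists a set X of at most k−1 edges such that G − X contains no A–B path. -/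
namespace SimpleGraph

open Finset
open scoped Classical

variable {V : Type} {G : SimpleGraph V}

namespace Walk

variable {a b : V}

noncomputable def arcFlow (w : G.Walk a b) (u v : V) : ℤ :=
  (w.darts.map Dart.toProd).count (u, v) - (w.darts.map Dart.toProd).count (v, u)

theorem arcFlow_swap (w : G.Walk a b) (u v : V) : w.arcFlow v u = -w.arcFlow u v := by
  simp only [arcFlow, neg_sub]

theorem arcFlow_reverse (w : G.Walk a b) (u v : V) : w.reverse.arcFlow u v = w.arcFlow v u := by
  have hcount : ∀ x y : V, (w.reverse.darts.map Dart.toProd).count (x, y) =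
      (w.darts.map Dart.toProd).count (y, x) := by
    intro x y
    rw [darts_reverse, List.map_reverse, List.count_reverse, List.map_map,
      show Dart.toProd ∘ Dart.symm = Prod.swap ∘ Dart.toProd from rfl, ← List.map_map,
      ← List.count_map_of_injective _ Prod.swap Prod.swap_injective, List.map_map,
      Prod.swap_swap_eq, List.map_id, Prod.swap_prod_mk]
  simp only [arcFlow, hcount]

theorem arcFlow_cons {c : V} (h : G.Adj a c) (w : G.Walk c b) (u v : V) :
    (cons h w).arcFlow u v = w.arcFlow u v + (if u = a ∧ v = c then 1 else 0)
      - (if u = c ∧ v = a then 1 else 0) := by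
  simp only [arcFlow, darts_cons, List.map_cons, List.count_cons, beq_iff_eq, Prod.mk.injEq]
  push_cast
  grind

theorem sum_arcFlow [Fintype V] (w : G.Walk a b) (u : V) :
    ∑ v, w.arcFlow u v = (if u = a then 1 else 0) - (if u = b then 1 else 0) := by
  induction w with
  | nil => simp [arcFlow]
  | @cons a c b h w ih =>
    simp only [arcFlow_cons, sum_sub_distrib, sum_add_distrib, ih, ite_and, sum_ite_irrel,
      sum_ite_eq', mem_univ, ↓reduceIte, sum_const_zero]
    ring

theorem arcFlow_eq_zero {w : G.Walk a b} {u v : V} (h : s(u, v) ∉ w.edges) :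
    w.arcFlow u v = 0 := by
  have hnot : ∀ x y, s(x, y) ∉ w.edges → (x, y) ∉ w.darts.map Dart.toProd := by
    intro x y hxy hmem
    obtain ⟨d, hd, hdxy⟩ := List.mem_map.1 hmem
    exact hxy (dart_edge_eq_mk'_iff.2 (Or.inl hdxy) ▸ List.mem_map_of_mem hd)
  rw [arcFlow, List.count_eq_zero_of_not_mem (hnot u v h),
    List.count_eq_zero_of_not_mem (hnot v u (Sym2.eq_swap ▸ h))]
  rfl

theorem arcFlow_nonpos {w : G.Walk a b} {u v : V} (h : (u, v) ∉ w.darts.map Dart.toProd) :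
    w.arcFlow u v ≤ 0 := by
  simp [arcFlow, List.count_eq_zero_of_not_mem h]

theorem IsPath.arcFlow_of_mem_darts {w : G.Walk a b} (hw : w.IsPath) {d : G.Dart}
    (hd : d ∈ w.darts) : w.arcFlow d.fst d.snd = 1 := by
  have hnodup : (w.darts.map Dart.edge).Nodup := hw.edges_nodup
  have hswap : (d.snd, d.fst) ∉ w.darts.map Dart.toProd := by
    rintro hmem
    obtain ⟨d', hd', hd'd⟩ := List.mem_map.1 hmem
    obtain rfl : d' = d.symm := Dart.ext _ _ hd'd
    exact d.symm_ne (List.inj_on_of_nodup_map hnodup hd' hd d.edge_symm)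
  have hone : (w.darts.map Dart.toProd).count d.toProd = 1 :=
    List.count_eq_one_of_mem ((List.Nodup.of_map _ hnodup).map Dart.toProd_injective)
      (List.mem_map_of_mem hd)
  simp [arcFlow, List.count_eq_zero_of_not_mem hswap, hone]

theorem apply_ne_zero_of_mem_edges {f : V → V → ℤ} {w : G.Walk a b}
    (hf : ∀ u v, f v u = -f u v) (hsat : ∀ d ∈ w.darts, f d.fst d.snd = 1) {u v : V}
    (huv : s(u, v) ∈ w.edges) : f u v ≠ 0 := by
  obtain ⟨d, hd, hduv⟩ := List.mem_map.1 huv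
  rcases dart_edge_eq_mk'_iff'.1 hduv with ⟨rfl, rfl⟩ | ⟨rfl, rfl⟩
  · simp [hsat d hd]
  · simp [hf d.fst, hsat d hd]

theorem IsPath.add_reverse_arcFlow_apply {f : V → V → ℤ} {w : G.Walk a b} (hw : w.IsPath)
    (hf : ∀ u v, f v u = -f u v) (hsat : ∀ d ∈ w.darts, f d.fst d.snd = 1) (u v : V) :
    (f + w.reverse.arcFlow) u v = if s(u, v) ∈ w.edges then 0 else f u v := by
  rw [Pi.add_apply, Pi.add_apply, w.arcFlow_reverse]
  split_ifs with huv
  · obtain ⟨d, hd, hduv⟩ := List.mem_map.1 huv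
    rcases dart_edge_eq_mk'_iff'.1 hduv with ⟨rfl, rfl⟩ | ⟨rfl, rfl⟩
    · rw [w.arcFlow_swap, hw.arcFlow_of_mem_darts hd, hsat d hd]
      rfl
    · rw [hw.arcFlow_of_mem_darts hd, hf, hsat d hd]
      rfl
  · rw [arcFlow_eq_zero (Sym2.eq_swap ▸ huv), add_zero]

theorem IsPath.exists_ABPath_edges_subset {A B : Set V} {w : G.Walk a b}
    (hw : w.IsPath) (ha : a ∈ A) (hb : b ∈ B) : ∃ p : ABPath G A B, p.walk.edges ⊆ w.edges := by
  induction hn : w.length using Nat.strong_induction_on generalizing a b with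
  | _ n ih =>
    by_cases hint : ∃ v ∈ w.support, v ≠ a ∧ v ≠ b ∧ (v ∈ A ∨ v ∈ B)
    · obtain ⟨v, hv, hva, hvb, hvAB⟩ := hint
      have hlen : (w.takeUntil v hv).length + (w.dropUntil v hv).length = n := by
        rw [← length_append, w.take_spec hv, hn]
      have htake : (w.takeUntil v hv).length ≠ 0 := fun h => hva (eq_of_length_eq_zero h).symm
      have hdrop : (w.dropUntil v hv).length ≠ 0 := fun h => hvb (eq_of_length_eq_zero h)
      rcases hvAB with hvA | hvB
      · obtain ⟨p, hp⟩ := ih _ (by omega) (hw.dropUntil hv) hvA hb rfl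
        exact ⟨p, fun e he => w.edges_dropUntil_subset_edges hv (hp he)⟩
      · obtain ⟨p, hp⟩ := ih _ (by omega) (hw.takeUntil hv) ha hvB rfl
        exact ⟨p, fun e he => w.edges_takeUntil_subset_edges hv (hp he)⟩
    · push Not at hint
      exact ⟨⟨a, b, w, hw, ha, hb, hint⟩, List.Subset.refl _⟩

end Walk

variable [Fintype V]

theorem exists_path_or_separating_finset (G : SimpleGraph V) (P : V → V → Prop) (A B : Set V) :
    (∃ a ∈ A, ∃ b ∈ B, ∃ w : G.Walk a b, w.IsPath ∧ ∀ d ∈ w.darts, P d.fst d.snd) ∨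
    ∃ Z : Finset V, (∀ a ∈ A, a ∈ Z) ∧ (∀ b ∈ B, b ∉ Z) ∧
      ∀ u ∈ Z, ∀ v ∉ Z, G.Adj u v → ¬ P u v := by
  set Z := univ.filter fun v => ∃ a ∈ A, ∃ w : G.Walk a v, ∀ d ∈ w.darts, P d.fst d.snd
  by_cases hB : ∃ b ∈ B, b ∈ Z
  · obtain ⟨b, hb, hbZ⟩ := hB
    obtain ⟨a, ha, w, hw⟩ := (mem_filter.1 hbZ).2
    exact Or.inl ⟨a, ha, b, hb, w.bypass, w.bypass_isPath,
      fun d hd => hw d (w.darts_bypass_subset_darts hd)⟩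
  · push Not at hB
    refine Or.inr ⟨Z, fun a ha => mem_filter.2 ⟨mem_univ _, a, ha, .nil, by simp⟩, hB, ?_⟩
    intro u hu v hv huv hP
    obtain ⟨a, ha, w, hw⟩ := (mem_filter.1 hu).2
    refine hv (mem_filter.2 ⟨mem_univ _, a, ha, w.concat huv, fun d hd => ?_⟩)
    rw [Walk.darts_concat, List.concat_eq_append, List.mem_append, List.mem_singleton] at hd
    rcases hd with hd | rfl
    · exact hw d hd
    · exact hP

/-- `f u v = 1` means one unit of flow along the edge from `u` to `v`, and then `f v u = -1`. -/
structure IsUnitFlow (G : SimpleGraph V) (T : Set V) (f : V → V → ℤ) : Prop where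
  swap : ∀ u v, f v u = -f u v
  le_one : ∀ u v, f u v ≤ 1
  adj : ∀ u v, f u v ≠ 0 → G.Adj u v
  conserve : ∀ v ∉ T, ∑ w, f v w = 0

noncomputable def flowValue (f : V → V → ℤ) (A : Set V) : ℤ :=
  ∑ u ∈ A.toFinset, ∑ v, f u v

theorem flowValue_add_arcFlow (f : V → V → ℤ) (A : Set V) {a b : V} (w : G.Walk a b) :
    flowValue (f + w.arcFlow) A =
      flowValue f A + (if a ∈ A then 1 else 0) - (if b ∈ A then 1 else 0) := by
  simp only [flowValue, Pi.add_apply, sum_add_distrib, w.sum_arcFlow, sum_sub_distrib,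
    sum_ite_eq', Set.mem_toFinset]
  ring

theorem sum_sum_eq_sum_sum_compl {f : V → V → ℤ} (hf : ∀ u v, f v u = -f u v) (Z : Finset V) :
    ∑ u ∈ Z, ∑ v, f u v = ∑ u ∈ Z, ∑ v ∈ Zᶜ, f u v := by
  have hinside : ∑ u ∈ Z, ∑ v ∈ Z, f u v = 0 := by
    have h : ∑ u ∈ Z, ∑ v ∈ Z, f u v = ∑ u ∈ Z, ∑ v ∈ Z, -f u v := by
      rw [sum_comm]
      exact sum_congr rfl fun u _ => sum_congr rfl fun v _ => hf u v
    simp only [sum_neg_distrib] at h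
    linarith
  simp only [← sum_add_sum_compl Z (f _), sum_add_distrib, hinside, zero_add]

namespace IsUnitFlow

variable {A B : Set V} {f : V → V → ℤ}

theorem flowValue_eq_sum_compl (hf : IsUnitFlow G (A ∪ B) f) {Z : Finset V}
    (hA : ∀ a ∈ A, a ∈ Z) (hB : ∀ b ∈ B, b ∉ Z) :
    flowValue f A = ∑ u ∈ Z, ∑ v ∈ Zᶜ, f u v := by
  rw [flowValue, ← sum_sum_eq_sum_sum_compl hf.swap]
  refine sum_subset (fun a ha => hA a (Set.mem_toFinset.1 ha)) fun u hu huA => ?_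
  exact hf.conserve u fun h => h.elim (fun h => huA (Set.mem_toFinset.2 h)) (hB u · hu)

theorem add_arcFlow {T : Set V} (hf : IsUnitFlow G T f) {a b : V} {w : G.Walk a b}
    (hw : w.IsPath) (hres : ∀ d ∈ w.darts, f d.fst d.snd < 1) (ha : a ∈ T) (hb : b ∈ T) :
    IsUnitFlow G T (f + w.arcFlow) where
  swap u v := by simp only [Pi.add_apply, hf.swap u v, w.arcFlow_swap u v, neg_add]
  le_one u v := by
    by_cases huv : (u, v) ∈ w.darts.map Dart.toProd
    · obtain ⟨d, hd, hduv⟩ := List.mem_map.1 huv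
      obtain ⟨rfl, rfl⟩ := Prod.ext_iff.1 hduv.symm
      have := hres d hd
      simp only [Pi.add_apply, hw.arcFlow_of_mem_darts hd]
      omega
    · have := hf.le_one u v
      have := Walk.arcFlow_nonpos huv
      simp only [Pi.add_apply]
      omega
  adj u v huv := by
    by_cases hf0 : f u v = 0
    · refine w.adj_of_mem_edges (not_not.1 fun h => huv ?_)
      simp [hf0, Walk.arcFlow_eq_zero h]
    · exact hf.adj u v hf0
  conserve v hv := by
    simp only [Pi.add_apply, sum_add_distrib, hf.conserve v hv, w.sum_arcFlow,
      if_neg (ne_of_mem_of_not_mem ha hv).symm, if_neg (ne_of_mem_of_not_mem hb hv).symm]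
    rfl

theorem add_reverse_arcFlow {T : Set V} (hf : IsUnitFlow G T f) {a b : V} {w : G.Walk a b}
    (hw : w.IsPath) (hsat : ∀ d ∈ w.darts, f d.fst d.snd = 1) (ha : a ∈ T) (hb : b ∈ T) :
    IsUnitFlow G T (f + w.reverse.arcFlow) := by
  refine hf.add_arcFlow hw.reverse (fun d hd => ?_) hb ha
  have := hsat _ (Walk.mem_darts_reverse.1 hd)
  simp only [Dart.symm_toProd, Prod.fst_swap, Prod.snd_swap] at this
  rw [hf.swap, this]
  omega

theorem exists_saturated_path (hf : IsUnitFlow G (A ∪ B) f) (hpos : 0 < flowValue f A) :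
    ∃ a ∈ A, ∃ b ∈ B, ∃ w : G.Walk a b, w.IsPath ∧ ∀ d ∈ w.darts, f d.fst d.snd = 1 := by
  refine (G.exists_path_or_separating_finset (f · · = 1) A B).resolve_right ?_
  rintro ⟨Z, hA, hB, hZ⟩
  have : flowValue f A ≤ 0 := by
    rw [hf.flowValue_eq_sum_compl hA hB]
    refine sum_nonpos fun u hu => sum_nonpos fun v hv => ?_
    have := hf.le_one u v
    by_cases huv : G.Adj u v
    · have := hZ u hu v (mem_compl.1 hv) huv
      omega
    · have := not_imp_comm.1 (hf.adj u v) huv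
      omega
  omega

theorem exists_augment_or_cut (hf : IsUnitFlow G (A ∪ B) f) (hAB : Disjoint A B) :
    (∃ g, IsUnitFlow G (A ∪ B) g ∧ flowValue g A = flowValue f A + 1) ∨
    ∃ X : Finset (Sym2 V), (X.card : ℤ) ≤ flowValue f A ∧ ↑X ⊆ G.edgeSet ∧
      ∀ a ∈ A, ∀ b ∈ B, ∀ w : G.Walk a b, ∃ e ∈ w.edges, e ∈ X := by
  rcases G.exists_path_or_separating_finset (f · · < 1) A B with
    ⟨a, ha, b, hb, w, hw, hres⟩ | ⟨Z, hA, hB, hZ⟩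
  · refine Or.inl ⟨f + w.arcFlow, hf.add_arcFlow hw hres (Or.inl ha) (Or.inr hb), ?_⟩
    rw [flowValue_add_arcFlow, if_pos ha, if_neg (hAB.notMem_of_mem_right hb), sub_zero]
  set E := (Z ×ˢ Zᶜ).filter fun p => G.Adj p.1 p.2
  refine Or.inr ⟨E.image fun p => s(p.1, p.2), ?_, ?_, ?_⟩
  · have hcross : ∀ p ∈ Z ×ˢ Zᶜ, f p.1 p.2 = if G.Adj p.1 p.2 then 1 else 0 := by
      intro p hp
      obtain ⟨hp1, hp2⟩ := mem_product.1 hp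
      have := hf.le_one p.1 p.2
      split_ifs with hadj
      · have := hZ p.1 hp1 p.2 (mem_compl.1 hp2) hadj
        omega
      · exact not_imp_comm.1 (hf.adj _ _) hadj
    calc ((E.image fun p => s(p.1, p.2)).card : ℤ) ≤ E.card := by exact_mod_cast card_image_le
      _ = ∑ p ∈ Z ×ˢ Zᶜ, f p.1 p.2 := by rw [sum_congr rfl hcross, sum_boole]
      _ = flowValue f A := by rw [hf.flowValue_eq_sum_compl hA hB, sum_product]
  · intro e he
    obtain ⟨p, hp, rfl⟩ := mem_image.1 he
    exact (mem_filter.1 hp).2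
  · intro a ha b hb w
    obtain ⟨d, hd, hdZ, hdZ'⟩ := w.exists_boundary_dart (Z : Set V) (hA a ha) (hB b hb)
    refine ⟨d.edge, List.mem_map_of_mem hd, mem_image.2 ⟨d.toProd, ?_, rfl⟩⟩
    exact mem_filter.2 ⟨mem_product.2 ⟨hdZ, mem_compl.2 hdZ'⟩, d.adj⟩

theorem exists_edgeDisjoint_ABPaths (hf : IsUnitFlow G (A ∪ B) f) (hAB : Disjoint A B) {t : ℕ}
    (ht : t ≤ flowValue f A) :
    ∃ P : Fin t → ABPath G A B,
      (∀ i j, i ≠ j → ∀ e, e ∈ (P i).walk.edges → e ∉ (P j).walk.edges) ∧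
      ∀ i u v, s(u, v) ∈ (P i).walk.edges → f u v ≠ 0 := by
  induction t generalizing f with
  | zero => exact ⟨Fin.elim0, fun i => i.elim0, fun i => i.elim0⟩
  | succ t ih =>
    obtain ⟨a, ha, b, hb, w, hw, hsat⟩ := hf.exists_saturated_path (by omega)
    have hg := hf.add_reverse_arcFlow hw hsat (Or.inl ha) (Or.inr hb)
    have hgval : flowValue (f + w.reverse.arcFlow) A = flowValue f A - 1 := by
      rw [flowValue_add_arcFlow, if_neg (hAB.notMem_of_mem_right hb), if_pos ha]
      ring
    obtain ⟨P, hPdisj, hPsupp⟩ := ih hg (by omega)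
    obtain ⟨p, hp⟩ := hw.exists_ABPath_edges_subset ha hb
    have hpP : ∀ i e, e ∈ p.walk.edges → e ∉ (P i).walk.edges := by
      intro i e hep heP
      induction e using Sym2.ind with
      | _ u v =>
        exact hPsupp i u v heP (by simp [hw.add_reverse_arcFlow_apply hf.swap hsat, hp hep])
    refine ⟨Fin.cons p P, pairwise_fin_succ_iff.2 ⟨fun i e h h' => hpP i e h' h, hpP, hPdisj⟩, ?_⟩
    intro i u v huv
    induction i using Fin.cases with
    | zero => exact Walk.apply_ne_zero_of_mem_edges hf.swap hsat (hp huv)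
    | succ i =>
      have := hPsupp i u v huv
      rw [hw.add_reverse_arcFlow_apply hf.swap hsat] at this
      split_ifs at this
      · exact absurd rfl this
      · exact this

end IsUnitFlow

theorem exists_unitFlow_or_cut {A B : Set V} (hAB : Disjoint A B) (k : ℕ) :
    (∃ f, IsUnitFlow G (A ∪ B) f ∧ k ≤ flowValue f A) ∨
    ∃ X : Finset (Sym2 V), X.card < k ∧ ↑X ⊆ G.edgeSet ∧
      ∀ a ∈ A, ∀ b ∈ B, ∀ w : G.Walk a b, ∃ e ∈ w.edges, e ∈ X := by
  induction k with
  | zero => exact Or.inl ⟨0, ⟨by simp, by simp, by simp, by simp⟩, by simp [flowValue]⟩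
  | succ k ih =>
    rcases ih with ⟨f, hf, hk⟩ | ⟨X, hX, hXG, hcover⟩
    · rcases hf.exists_augment_or_cut hAB with ⟨g, hg, hval⟩ | ⟨X, hX, hXG, hcover⟩
      · exact Or.inl ⟨g, hg, by push_cast; omega⟩
      · by_cases hk' : (k + 1 : ℤ) ≤ flowValue f A
        · exact Or.inl ⟨f, hf, by push_cast; exact hk'⟩
        · exact Or.inr ⟨X, by omega, hXG, hcover⟩
    · exact Or.inr ⟨X, by omega, hXG, hcover⟩

end SimpleGraph

theorem menger_edge_general {V : Type} [Fintype V]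
    (G : SimpleGraph V) (A B : Set V) (k : ℕ) :
    (∃ P : Fin k → ABPath G A B,
      ∀ i j, i ≠ j → ∀ e, e ∈ (P i).walk.edges → e ∉ (P j).walk.edges)
    ∨ (∃ X : Finset (Sym2 V), X.card ≤ k - 1 ∧ ↑X ⊆ G.edgeSet ∧
        ∀ p : ABPath G A B, ∃ e ∈ p.walk.edges, e ∈ X) := by
  by_cases hAB : Disjoint A B
  · rcases SimpleGraph.exists_unitFlow_or_cut (G := G) hAB k with
      ⟨f, hf, hk⟩ | ⟨X, hX, hXG, hcover⟩
    · obtain ⟨P, hP, -⟩ := hf.exists_edgeDisjoint_ABPaths hAB hk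
      exact Or.inl ⟨P, hP⟩
    · exact Or.inr ⟨X, by omega, hXG, fun p => hcover p.a p.ha p.b p.hb p.walk⟩
  · obtain ⟨x, hxA, hxB⟩ := Set.not_disjoint_iff.1 hAB
    refine Or.inl ⟨fun _ => ⟨x, x, .nil, .nil, hxA, hxB, fun v hv hvx _ => ?_⟩, by simp⟩
    exact absurd (by simpa using hv) hvx

/-- Menger's theorem, edge version: either there are `k` pairwise edge-disjoint
`A`–`B` paths, or at most `k-1` edges meet every `A`–`B` path. -/
theorem menger_edge {V : Type} [Fintype V] [DecidableEq V]
    (G : SimpleGraph V) (A B : Set V) (k : ℕ) :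
    (∃ P : Fin k → ABPath G A B,
      ∀ i j, i ≠ j → ∀ e, e ∈ (P i).walk.edges → e ∉ (P j).walk.edges)
    ∨ (∃ X : Finset (Sym2 V), X.card ≤ k - 1 ∧ ↑X ⊆ G.edgeSet ∧
        ∀ p : ABPath G A B, ∃ e ∈ p.walk.edges, e ∈ X) :=
  menger_edge_general G A B k
end

section
/- In an elementary wall of size m×n, there are exactly n+1 pairwise vertex-disjoint paths between the first row and the last ((m+1)-th) row, and no more: any set of pairwise disjoint first-row–last-row paths has size at most n+1. -/
/-- The `(m+1) × (2n+2)` grid with every second vertical edge removed (before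
deleting degree-1 vertices): all horizontal edges, and the vertical edge between
rows `i` and `i+1` in column `c` (0-based) precisely when `i` and `c` have the
same parity. -/
def wallFullRel (m n : ℕ) :
    (Fin (m + 1) × Fin (2 * n + 2)) → (Fin (m + 1) × Fin (2 * n + 2)) → Prop :=
  fun p q =>
    (p.1 = q.1 ∧ q.2.val = p.2.val + 1) ∨
    (p.2 = q.2 ∧ q.1.val = p.1.val + 1 ∧ p.1.val % 2 = p.2.val % 2)

/-- The elementary wall before removal of degree-1 vertices. -/
def wallFull (m n : ℕ) : SimpleGraph (Fin (m + 1) × Fin (2 * n + 2)) :=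
  SimpleGraph.fromRel (wallFullRel m n)

/-- The vertices deleted from the elementary wall: those of degree at most 1. -/
def wallBad (m n : ℕ) : Set (Fin (m + 1) × Fin (2 * n + 2)) :=
  {v | ((wallFull m n).neighborSet v).ncard ≤ 1}

/-- The vertex set of the elementary wall of size `m × n`. -/
abbrev WallVert (m n : ℕ) : Type := {v : Fin (m + 1) × Fin (2 * n + 2) // v ∉ wallBad m n}

/-- The elementary wall of size `m × n`: the `(m+1) × (2n+2)` grid with every
second vertical edge removed in an alternating pattern, and all vertices of
degree 1 deleted. -/
def elemWall (m n : ℕ) : SimpleGraph (WallVert m n) :=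
  (wallFull m n).induce {v | v ∉ wallBad m n}

/-- A path in the elementary wall of size `m × n` from the first row (grid row
`0`) to the last row (grid row `m`). -/
structure FirstLastRowPath (m n : ℕ) where
  s : WallVert m n
  t : WallVert m n
  walk : (elemWall m n).Walk s t
  isPath : walk.IsPath
  hs : s.val.1.val = 0
  ht : t.val.1.val = m

/-!
Wall column `j` (grid columns `2j` and `2j + 1`) contains a first-to-last-row path that
alternates between its vertical edges and the horizontal edges joining them, and distinct wall
columns are disjoint. Conversely, the only edges leaving the first row are the `n + 1` vertical
edges at the even grid columns, so every first-to-last-row path contains one of their upper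
endpoints, and disjoint paths contain distinct ones.
-/

lemma SimpleGraph.Reachable.exists_isPath_of_induce {V : Type*} {G : SimpleGraph V}
    {s t : Set V} (hst : s ⊆ t) {u v : s} (h : (G.induce s).Reachable u v) :
    ∃ p : (G.induce t).Walk (Set.inclusion hst u) (Set.inclusion hst v),
      p.IsPath ∧ ∀ x ∈ p.support, x.val ∈ s := by
  classical
  obtain ⟨w⟩ := h
  refine ⟨(w.map (G.induceHomOfLE hst).toHom).bypass, SimpleGraph.Walk.bypass_isPath _,
    fun x hx => ?_⟩
  obtain ⟨y, -, rfl⟩ := List.mem_map.mp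
    (SimpleGraph.Walk.support_map _ w ▸ SimpleGraph.Walk.support_bypass_subset_support _ hx)
  exact y.2

lemma card_le_of_disjoint_of_injOn {V : Type*} {k N : ℕ} (S : Fin k → Set V)
    (hS : ∀ i j, i ≠ j → ∀ x ∈ S i, x ∉ S j) (T : Set V) (g : V → Fin N) (hg : Set.InjOn g T)
    (hT : ∀ i, ∃ x ∈ S i, x ∈ T) : k ≤ N := by
  choose x hxS hxT using hT
  have hinj : Function.Injective (g ∘ x) := fun i j hij => by
    by_contra hne
    exact hS i j hne (x i) (hxS i) (hg (hxT i) (hxT j) hij ▸ hxS j)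
  simpa using Fintype.card_le_of_injective _ hinj

namespace ElemWall

variable {m n : ℕ}

lemma wallFull_adj_iff {p q : Fin (m + 1) × Fin (2 * n + 2)} :
    (wallFull m n).Adj p q ↔ wallFullRel m n p q ∨ wallFullRel m n q p := by
  rw [wallFull, SimpleGraph.fromRel_adj, and_iff_right_iff_imp]
  rintro (h | h) rfl <;> simp only [wallFullRel] at h <;> omega

lemma notMem_wallBad_of_adj {v a b : Fin (m + 1) × Fin (2 * n + 2)}
    (ha : (wallFull m n).Adj v a) (hb : (wallFull m n).Adj v b) (hab : a ≠ b) :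
    v ∉ wallBad m n := by
  simp only [wallBad, Set.mem_ofPred_eq, not_le, Set.one_lt_ncard_iff (Set.toFinite _)]
  exact ⟨a, b, ha, hb, hab⟩

/-- Columns `2j` and `2j + 1` are joined in every row, so a vertex with a vertical
neighbour has two neighbours. -/
lemma notMem_wallBad_of_adj_of_snd_eq {p q : Fin (m + 1) × Fin (2 * n + 2)}
    (hpq : (wallFull m n).Adj p q) (hcol : p.2 = q.2) : p ∉ wallBad m n := by
  obtain ⟨c, hc⟩ : ∃ c : Fin (2 * n + 2), (p.2.val + 1 = c.val ∨ c.val + 1 = p.2.val) ∧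
      c.val / 2 = p.2.val / 2 := by
    have := p.2.isLt
    rcases Nat.even_or_odd p.2.val with ⟨k, hk⟩ | ⟨k, hk⟩
    · exact ⟨⟨p.2.val + 1, by omega⟩, by dsimp only; omega⟩
    · exact ⟨⟨p.2.val - 1, by omega⟩, by dsimp only; omega⟩
  refine notMem_wallBad_of_adj (b := (p.1, c)) hpq ?_ ?_
  · rw [wallFull_adj_iff]
    simp only [wallFullRel, true_and]
    omega
  · rintro rfl
    rw [wallFull_adj_iff] at hpq
    simp only [wallFullRel, Fin.ext_iff] at hpq hcol
    omega

def wallColumn (m n j : ℕ) : Set (Fin (m + 1) × Fin (2 * n + 2)) :=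
  {p | p ∉ wallBad m n ∧ p.2.val / 2 = j}

section Rungs

variable {j i : ℕ} (hj : j ≤ n) (hi : i < m)

def rungTop : Fin (m + 1) × Fin (2 * n + 2) := (⟨i, by omega⟩, ⟨2 * j + i % 2, by omega⟩)

def rungBot : Fin (m + 1) × Fin (2 * n + 2) := (⟨i + 1, by omega⟩, ⟨2 * j + i % 2, by omega⟩)

lemma rungTop_adj_rungBot : (wallFull m n).Adj (rungTop hj hi) (rungBot hj hi) := by
  rw [wallFull_adj_iff]
  simp only [wallFullRel, rungTop, rungBot, Fin.ext_iff, Fin.val_mk, true_and]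
  omega

lemma rungTop_mem_wallColumn : rungTop hj hi ∈ wallColumn m n j :=
  ⟨notMem_wallBad_of_adj_of_snd_eq (rungTop_adj_rungBot hj hi) rfl,
    by simp only [rungTop]; omega⟩

lemma rungBot_mem_wallColumn : rungBot hj hi ∈ wallColumn m n j :=
  ⟨notMem_wallBad_of_adj_of_snd_eq (rungTop_adj_rungBot hj hi).symm rfl,
    by simp only [rungBot]; omega⟩

lemma rungBot_adj_rungTop_succ (hi' : i + 1 < m) :
    (wallFull m n).Adj (rungBot hj hi) (rungTop hj hi') := by
  rw [wallFull_adj_iff]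
  simp only [wallFullRel, rungTop, rungBot, Fin.ext_iff, Fin.val_mk, true_and]
  omega

end Rungs

lemma reachable_rungBot {j : ℕ} (hj : j ≤ n) (hm : 0 < m) :
    ∀ i (hi : i < m), ((wallFull m n).induce (wallColumn m n j)).Reachable
      ⟨rungTop hj hm, rungTop_mem_wallColumn hj hm⟩ ⟨rungBot hj hi, rungBot_mem_wallColumn hj hi⟩
  | 0, hi => (SimpleGraph.induce_adj.mpr (rungTop_adj_rungBot hj hi)).reachable
  | i + 1, hi =>
    have hi' : i < m := by omega
    let top : wallColumn m n j := ⟨rungTop hj hi, rungTop_mem_wallColumn hj hi⟩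
    let bot : wallColumn m n j := ⟨rungBot hj hi, rungBot_mem_wallColumn hj hi⟩
    have hbot_top : ((wallFull m n).induce (wallColumn m n j)).Adj
        ⟨rungBot hj hi', rungBot_mem_wallColumn hj hi'⟩ top :=
      SimpleGraph.induce_adj.mpr (rungBot_adj_rungTop_succ hj hi' hi)
    have htop_bot : ((wallFull m n).induce (wallColumn m n j)).Adj top bot :=
      SimpleGraph.induce_adj.mpr (rungTop_adj_rungBot hj hi)
    ((reachable_rungBot hj hm i hi').trans hbot_top.reachable).trans htop_bot.reachable

lemma exists_firstLastRowPath_subset_wallColumn {j : ℕ} (hm : 1 ≤ m) (hj : j ≤ n) :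
    ∃ P : FirstLastRowPath m n, ∀ x ∈ P.walk.support, x.val.2.val / 2 = j := by
  have hm' : m - 1 < m := by omega
  obtain ⟨p, hp, hsupp⟩ := (reachable_rungBot hj hm (m - 1) hm').exists_isPath_of_induce
    (t := {v | v ∉ wallBad m n}) fun _ hv => hv.1
  exact ⟨⟨_, _, p, hp, rfl, by simp only [rungBot]; omega⟩,
    fun x hx => (hsupp x hx).2⟩

lemma snd_even_of_adj_of_fst_eq_zero {p q : Fin (m + 1) × Fin (2 * n + 2)}
    (hpq : (wallFull m n).Adj p q) (hp : p.1.val = 0) (hq : q.1.val ≠ 0) : p.2.val % 2 = 0 := by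
  rw [wallFull_adj_iff] at hpq
  simp only [wallFullRel, Fin.ext_iff] at hpq
  omega

lemma exists_mem_support_fst_eq_zero_snd_even (hm : 1 ≤ m) (P : FirstLastRowPath m n) :
    ∃ x ∈ P.walk.support, x.val.1.val = 0 ∧ x.val.2.val % 2 = 0 := by
  obtain ⟨d, hd, hfst, hsnd⟩ := P.walk.exists_boundary_dart {x | x.val.1.val = 0} P.hs
    (by simp only [Set.mem_ofPred_eq, P.ht]; omega)
  exact ⟨d.fst, P.walk.dart_fst_mem_support_of_mem_darts hd, hfst,
    snd_even_of_adj_of_fst_eq_zero d.adj hfst hsnd⟩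

end ElemWall

theorem elemWall_firstLastRow_paths_general (m n : ℕ) (hm : 1 ≤ m) :
    (∃ P : Fin (n + 1) → FirstLastRowPath m n,
      ∀ i j, i ≠ j → ∀ x, x ∈ (P i).walk.support → x ∉ (P j).walk.support) ∧
    (∀ (k : ℕ) (P : Fin k → FirstLastRowPath m n),
      (∀ i j, i ≠ j → ∀ x, x ∈ (P i).walk.support → x ∉ (P j).walk.support) →
      k ≤ n + 1) := by
  constructor
  · choose P hP using fun j : Fin (n + 1) =>
      ElemWall.exists_firstLastRowPath_subset_wallColumn hm (Nat.lt_succ_iff.mp j.isLt)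
    exact ⟨P, fun i j hij x hxi hxj => hij (Fin.ext ((hP i x hxi).symm.trans (hP j x hxj)))⟩
  · intro k P hP
    refine card_le_of_disjoint_of_injOn (fun i => {x | x ∈ (P i).walk.support}) hP
      {x | x.val.1.val = 0 ∧ x.val.2.val % 2 = 0}
      (fun x : WallVert m n => ⟨x.val.2.val / 2, by omega⟩) ?_
      fun i => ElemWall.exists_mem_support_fst_eq_zero_snd_even hm (P i)
    rintro x ⟨hx0, hx2⟩ y ⟨hy0, hy2⟩ hxy
    simp only [Fin.mk.injEq] at hxy
    exact Subtype.ext (Prod.ext (Fin.ext (hx0.trans hy0.symm)) (Fin.ext (by omega)))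

/-- In an elementary wall of size `m × n` (`m, n ≥ 1`) there are exactly `n + 1`
pairwise vertex-disjoint paths between the first and the last row: such a
family exists, and every pairwise disjoint family has at most `n + 1` members. -/
theorem elemWall_firstLastRow_paths (m n : ℕ) (hm : 1 ≤ m) (hn : 1 ≤ n) :
    (∃ P : Fin (n + 1) → FirstLastRowPath m n,
      ∀ i j, i ≠ j → ∀ x, x ∈ (P i).walk.support → x ∉ (P j).walk.support) ∧
    (∀ (k : ℕ) (P : Fin k → FirstLastRowPath m n),
      (∀ i j, i ≠ j → ∀ x, x ∈ (P i).walk.support → x ∉ (P j).walk.support) →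
      k ≤ n + 1) :=
  elemWall_firstLastRow_paths_general m n hm
end

section
/- Let G be a graph, e_1 = ab and e_2 = cd edges of G, and let Z be obtained from G − {e_1, e_2} by replacing each remaining edge gh by 2r internally disjoint g–h paths of length 2, and attaching a Heinlein wall W of size 2r by identifying its terminals a*, b*, c*, d* with a, b, c, d respectively. Then for every edge set U ⊆ E(Z) with |U| ≤ r, the graph Z − U contains a subdivision of G. -/
/-!
Since `|U| ≤ r` and each of the following families consists of `2r` pairwise edge-disjoint
pieces, the pigeonhole principle picks a piece avoiding `U` in every family:
* for `e₁ = ab`: a row `P^j` of the wall together with the bottleneck edge `z j z (j+1)`;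
* for each level `s ≠ j` of the bottleneck: a detour `z s — u s (2m) — u s (2m+1) — z (s+1)`
  through the row `P^s`;
* for every other edge of `G`: one of its `2r` paths of length 2.
Then `e₁` runs along `P^j`, `e₂ = cd` runs along the bottleneck, crossing level `j` directly and
every other level by its detour, and every other edge uses its path of length 2. These paths are
internally disjoint since every inner vertex of `Z` is reserved for a single edge of `G`.
-/

/-- A subdivision of `H` inside `G`: an injection of the vertices of `H` into
`G` together with, for each edge of `H`, a path in `G` between the images of
its endvertices, such that these paths are internally disjoint from each other
and from the images of the vertices of `H`. -/
structure SubdivisionIn {α β : Type} (H : SimpleGraph α) (G : SimpleGraph β) where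
  vmap : α ↪ β
  walk : ∀ ⦃x y : α⦄, H.Adj x y → G.Walk (vmap x) (vmap y)
  isPath : ∀ ⦃x y : α⦄ (h : H.Adj x y), (walk h).IsPath
  symm : ∀ ⦃x y : α⦄ (h : H.Adj x y), walk h.symm = (walk h).reverse
  internal : ∀ ⦃x y : α⦄ (h : H.Adj x y), ∀ v ∈ (walk h).support,
    (∃ w, v = vmap w) → v = vmap x ∨ v = vmap y
  disj : ∀ ⦃x y x' y' : α⦄ (h : H.Adj x y) (h' : H.Adj x' y'),
    s(x, y) ≠ s(x', y') → ∀ v, v ∈ (walk h).support → v ∈ (walk h').support →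
      (v = vmap x ∨ v = vmap y) ∧ (v = vmap x' ∨ v = vmap y')

/-- The vertices of the graph `Z` built from `G` with distinguished edges
`e₁ = ab`, `e₂ = cd`: the original vertices, for each remaining edge `e` of `G`
the `2r` midpoints of the paths of length 2 replacing `e`, the interior path
vertices `u j i` of the Heinlein wall of size `2r` (path `j`, position `i`,
0-based), and the interior bottleneck vertices (index `t` encodes `z (t+1)`). -/
abbrev ZVert (V : Type) (G : SimpleGraph V) (a b c d : V) (r : ℕ) : Type :=
  V ⊕ ({e : Sym2 V // e ∈ G.edgeSet ∧ e ≠ s(a, b) ∧ e ≠ s(c, d)} × Fin (2 * r)) ⊕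
    ((Fin (2 * r) × Fin (4 * r)) ⊕ Fin (2 * r - 1))

/-- The defining relation of `Z`: each remaining edge of `G` is replaced by `2r`
internally disjoint paths of length 2, and a Heinlein wall of size `2r` is
attached, its terminals `a*, b*, c*, d*` being identified with `a, b, c, d`
(recall `c* = z 0` and `d* = z 2r`). -/
def ZRel (V : Type) (G : SimpleGraph V) (a b c d : V) (r : ℕ) :
    ZVert V G a b c d r → ZVert V G a b c d r → Prop := fun x y =>
  match x, y with
  -- endvertices of a multiplied edge to its midpoints
  | Sum.inl v, Sum.inr (Sum.inl (e, _)) => v ∈ e.val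
  -- the paths P^j of the Heinlein wall
  | Sum.inr (Sum.inr (Sum.inl (j, i))), Sum.inr (Sum.inr (Sum.inl (j', i'))) =>
      j = j' ∧ i'.val = i.val + 1
  -- interior bottleneck vertices to path vertices: z s — u j i for even i
  -- iff s = j, for odd i iff s = j + 1 (here s = t + 1)
  | Sum.inr (Sum.inr (Sum.inr t)), Sum.inr (Sum.inr (Sum.inl (j, i))) =>
      (i.val % 2 = 0 ∧ t.val + 1 = j.val) ∨ (i.val % 2 = 1 ∧ t.val = j.val)
  -- consecutive interior bottleneck vertices
  | Sum.inr (Sum.inr (Sum.inr t)), Sum.inr (Sum.inr (Sum.inr t')) =>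
      t'.val = t.val + 1
  -- the terminals a* = a, b* = b, c* = z 0 = c, d* = z 2r = d to path vertices
  | Sum.inl v, Sum.inr (Sum.inr (Sum.inl (j, i))) =>
      (v = a ∧ i.val = 0) ∨ (v = b ∧ i.val = 4 * r - 1) ∨
      (v = c ∧ i.val % 2 = 0 ∧ j.val = 0) ∨
      (v = d ∧ i.val % 2 = 1 ∧ j.val + 1 = 2 * r)
  -- the terminals c* = z 0 and d* = z 2r to interior bottleneck vertices
  | Sum.inl v, Sum.inr (Sum.inr (Sum.inr t)) =>
      (v = c ∧ t.val = 0) ∨ (v = d ∧ t.val + 2 = 2 * r)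
  | _, _ => False

/-- The graph `Z` of the construction. -/
def ZGraph (V : Type) (G : SimpleGraph V) (a b c d : V) (r : ℕ) :
    SimpleGraph (ZVert V G a b c d r) :=
  SimpleGraph.fromRel (ZRel V G a b c d r)

theorem Finset.exists_forall_not_of_card_lt {ι E : Type*} {K : ι → E → Prop} {s : Finset ι}
    (hK : ∀ i ∈ s, ∀ i' ∈ s, ∀ e, K i e → K i' e → i = i') {U : Finset E}
    (hU : U.card < s.card) : ∃ i ∈ s, ∀ e ∈ U, ¬ K i e := by
  by_contra! hbad
  exact hU.not_ge (Finset.card_le_card_of_forall_subsingleton K hbad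
    fun e _ i ⟨hi, hie⟩ i' ⟨hi', hi'e⟩ => hK i hi i' hi' e hie hi'e)

namespace Sym2

variable {α ι : Type*}

def LabelledBy (ℓ : α → Option ι) (i : ι) (e : Sym2 α) : Prop :=
  (∃ x ∈ e, ℓ x = some i) ∧ ∀ x ∈ e, ℓ x = none ∨ ℓ x = some i

theorem LabelledBy.eq {ℓ : α → Option ι} {i i' : ι} {e : Sym2 α}
    (h : e.LabelledBy ℓ i) (h' : e.LabelledBy ℓ i') : i = i' := by
  obtain ⟨x, hx, hxi⟩ := h.1
  rcases h'.2 x hx with hx' | hx' <;> rw [hxi] at hx'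
  · cases hx'
  · exact Option.some_injective _ hx'

theorem labelledBy_mk {ℓ : α → Option ι} {i : ι} {x y : α} (hx : ℓ x = some i)
    (hy : ℓ y = none ∨ ℓ y = some i) : s(x, y).LabelledBy ℓ i := by
  refine ⟨⟨x, mem_mk_left x y, hx⟩, fun z hz => ?_⟩
  rcases mem_iff.mp hz with rfl | rfl
  exacts [Or.inr hx, hy]

theorem labelledBy_mk' {ℓ : α → Option ι} {i : ι} {x y : α}
    (hx : ℓ x = none ∨ ℓ x = some i) (hy : ℓ y = some i) : s(x, y).LabelledBy ℓ i :=
  eq_swap (a := y) ▸ labelledBy_mk hy hx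

end Sym2

namespace SimpleGraph

variable {β γ : Type*} {G : SimpleGraph β}

def HasTaggedPath (G : SimpleGraph β) (tag : β → Option γ) (u v : β) (t : γ) : Prop :=
  ∃ p : G.Walk u v, p.IsPath ∧ ∀ w ∈ p.support, w = u ∨ w = v ∨ tag w = some t

theorem HasTaggedPath.symm {tag : β → Option γ} {u v : β} {t : γ}
    (h : G.HasTaggedPath tag u v t) : G.HasTaggedPath tag v u t := by
  obtain ⟨p, hp, hsupp⟩ := h
  refine ⟨p.reverse, hp.reverse, fun w hw => ?_⟩
  rw [Walk.support_reverse, List.mem_reverse] at hw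
  rcases hsupp w hw with h | h | h
  exacts [Or.inr (Or.inl h), Or.inl h, Or.inr (Or.inr h)]

theorem HasTaggedPath.mono {tag tag' : β → Option γ} {u v : β} {t t' : γ}
    (h : G.HasTaggedPath tag u v t) (htag : ∀ w, tag w = some t → tag' w = some t') :
    G.HasTaggedPath tag' u v t' := by
  obtain ⟨p, hp, hsupp⟩ := h
  refine ⟨p, hp, fun w hw => ?_⟩
  rcases hsupp w hw with h | h | h
  exacts [Or.inl h, Or.inr (Or.inl h), Or.inr (Or.inr (htag w h))]

theorem HasTaggedPath.of_sym2_eq {α : Type*} {f : α → β} {tag : β → Option (Sym2 α)}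
    {x y u v : α} (h : G.HasTaggedPath tag (f u) (f v) s(u, v)) (he : s(x, y) = s(u, v)) :
    G.HasTaggedPath tag (f x) (f y) s(x, y) := by
  rcases Sym2.eq_iff.mp he with ⟨rfl, rfl⟩ | ⟨rfl, rfl⟩
  · exact h
  · rw [Sym2.eq_swap]
    exact h.symm

theorem Adj.hasTaggedPath {tag : β → Option γ} {u v : β} (h : G.Adj u v) (t : γ) :
    G.HasTaggedPath tag u v t :=
  ⟨h.toWalk, h.isPath_toWalk, by simp⟩

theorem Walk.IsPath.append {u v w : β} {p : G.Walk u v} {q : G.Walk v w} (hp : p.IsPath)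
    (hq : q.IsPath) (hpq : ∀ x ∈ p.support, x ∈ q.support → x = v) : (p.append q).IsPath := by
  rw [Walk.isPath_def, Walk.support_append, List.nodup_append]
  have hq' := hq.support_nodup
  rw [← Walk.cons_tail_support, List.nodup_cons] at hq'
  refine ⟨hp.support_nodup, hq'.2, fun x hx y hy hxy => ?_⟩
  subst hxy
  exact hq'.1 (hpq x hx (List.mem_of_mem_tail hy) ▸ hy)

theorem exists_isPath_of_chain {u v : β} (z : ℕ → β) (ℓ : β → Option ℕ) (n : ℕ)
    (hu : z 0 = u) (hv : z n = v) (hz : ∀ s ≤ n, ∀ t ≤ n, z s = z t → s = t)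
    (hℓ : ∀ t ≤ n, ℓ (z t) = none)
    (hseg : ∀ s < n, G.HasTaggedPath ℓ (z s) (z (s + 1)) s) :
    ∃ p : G.Walk u v, p.IsPath ∧
      ∀ w ∈ p.support, (∃ t ≤ n, w = z t) ∨ ∃ s < n, ℓ w = some s := by
  subst hu hv
  induction n with
  | zero =>
    exact ⟨Walk.nil, Walk.IsPath.nil, fun v hv => Or.inl ⟨0, le_rfl, by simpa using hv⟩⟩
  | succ n ih =>
    obtain ⟨p, hp, hpsupp⟩ := ih (fun s hs t ht => hz s (by omega) t (by omega))
      (fun t ht => hℓ t (by omega)) (fun s hs => hseg s (by omega))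
    obtain ⟨q, hq, hqsupp⟩ := hseg n (by omega)
    refine ⟨p.append q, hp.append hq fun x hx hx' => ?_, fun x hx => ?_⟩
    · rcases hpsupp x hx with ⟨t, ht, rfl⟩ | ⟨s, hs, hxs⟩ <;>
        rcases hqsupp _ hx' with h | h | h
      · exact h
      · exact absurd (hz t (by omega) (n + 1) le_rfl h) (by omega)
      · rw [hℓ t (by omega)] at h; cases h
      · exact h
      · rw [h, hℓ (n + 1) le_rfl] at hxs; cases hxs
      · rw [hxs] at h; cases h; omega
    · rw [Walk.support_append, List.mem_append] at hx
      rcases hx with hx | hx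
      · rcases hpsupp x hx with ⟨t, ht, h⟩ | ⟨s, hs, h⟩
        exacts [Or.inl ⟨t, by omega, h⟩, Or.inr ⟨s, by omega, h⟩]
      · rcases hqsupp x (List.mem_of_mem_tail hx) with h | h | h
        exacts [Or.inl ⟨n, by omega, h⟩, Or.inl ⟨n + 1, le_rfl, h⟩, Or.inr ⟨n, by omega, h⟩]

end SimpleGraph

namespace SubdivisionIn

open SimpleGraph

variable {α β : Type} {H : SimpleGraph α} {G : SimpleGraph β}

theorem exists_symm_walks {f : α → β} {tag : β → Option (Sym2 α)}
    (hpath : ∀ ⦃x y⦄, H.Adj x y → G.HasTaggedPath tag (f x) (f y) s(x, y)) :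
    ∃ walk : ∀ ⦃x y⦄, H.Adj x y → G.Walk (f x) (f y),
      (∀ ⦃x y⦄ (h : H.Adj x y), walk h.symm = (walk h).reverse) ∧
      ∀ ⦃x y⦄ (h : H.Adj x y), (walk h).IsPath ∧
        ∀ v ∈ (walk h).support, v = f x ∨ v = f y ∨ tag v = some s(x, y) := by
  let : LinearOrder α := WellOrderingRel.isWellOrder.linearOrder
  choose P hP hPsupp using hpath
  -- orienting every edge from its smaller end makes the family symmetric
  refine ⟨fun x y h => if x < y then P h else (P h.symm).reverse, fun x y h => ?_,
    fun x y h => ?_⟩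
  · rcases lt_trichotomy x y with hxy | rfl | hxy
    · simp [hxy, hxy.not_gt]
    · exact (H.irrefl h).elim
    · simp [hxy, hxy.not_gt]
  · dsimp only
    split_ifs
    · exact ⟨hP h, hPsupp h⟩
    refine ⟨(hP h.symm).reverse, fun v hv => ?_⟩
    rw [Walk.support_reverse, List.mem_reverse] at hv
    rcases hPsupp h.symm v hv with h' | h' | h'
    exacts [Or.inr (Or.inl h'), Or.inl h', Or.inr (Or.inr (h'.trans (by rw [Sym2.eq_swap])))]

theorem nonempty_of_hasTaggedPath (f : α ↪ β) (tag : β → Option (Sym2 α))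
    (htag : ∀ x, tag (f x) = none)
    (hpath : ∀ ⦃x y⦄, H.Adj x y → G.HasTaggedPath tag (f x) (f y) s(x, y)) :
    Nonempty (SubdivisionIn H G) := by
  obtain ⟨walk, hsymm, hwalk⟩ := exists_symm_walks hpath
  have hinternal : ∀ ⦃x y⦄ (h : H.Adj x y) (w : α), f w ∈ (walk h).support →
      f w = f x ∨ f w = f y := by
    intro x y h w hw
    rcases (hwalk h).2 (f w) hw with h1 | h1 | h1
    exacts [Or.inl h1, Or.inr h1, by rw [htag] at h1; cases h1]
  refine ⟨⟨f, walk, fun x y h => (hwalk h).1, hsymm,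
    fun x y h v hv ⟨w, hw⟩ => hw ▸ hinternal h w (hw ▸ hv),
    fun x y x' y' h h' hne v hv hv' => ?_⟩⟩
  by_cases hvf : ∃ w, v = f w
  · obtain ⟨w, rfl⟩ := hvf
    exact ⟨hinternal h w hv, hinternal h' w hv'⟩
  rw [not_exists] at hvf
  rcases (hwalk h).2 v hv with h1 | h1 | h1
  · exact absurd h1 (hvf x)
  · exact absurd h1 (hvf y)
  rcases (hwalk h').2 v hv' with h2 | h2 | h2
  · exact absurd h2 (hvf x')
  · exact absurd h2 (hvf y')
  exact absurd (Option.some_injective _ (h1.symm.trans h2)) hne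

end SubdivisionIn

namespace ZGraph

variable {V : Type} {G : SimpleGraph V} {a b c d : V} {r : ℕ}

open SimpleGraph

abbrev RemainingEdge (G : SimpleGraph V) (a b c d : V) : Type :=
  {e : Sym2 V // e ∈ G.edgeSet ∧ e ≠ s(a, b) ∧ e ≠ s(c, d)}

variable (G a b c d r) in
/-- The vertex `u j i` of the wall path `P^j` (junk value `a` outside the wall). -/
def wallVertex (j i : ℕ) : ZVert V G a b c d r :=
  if h : j < 2 * r ∧ i < 4 * r then Sum.inr (Sum.inr (Sum.inl (⟨j, h.1⟩, ⟨i, h.2⟩)))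
  else Sum.inl a

variable (G a b c d r) in
/-- The bottleneck vertex `z t`, where `z 0 = c` and `z (2r) = d`. -/
def bottleneck (t : ℕ) : ZVert V G a b c d r :=
  if t = 0 then Sum.inl c
  else if h : t < 2 * r then Sum.inr (Sum.inr (Sum.inr ⟨t - 1, by omega⟩))
  else Sum.inl d

variable (G a b c d r) in
def bottleneckEdge (t : ℕ) : Sym2 (ZVert V G a b c d r) :=
  s(bottleneck G a b c d r t, bottleneck G a b c d r (t + 1))

def wallPos : ZVert V G a b c d r → Option (ℕ × ℕ)
  | Sum.inr (Sum.inr (Sum.inl (j, i))) => some (j, i)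
  | _ => none

def wallLevel (v : ZVert V G a b c d r) : Option ℕ :=
  (wallPos v).map Prod.fst

/-- The vertices `u j (2m)` and `u j (2m+1)` form the block `(j, m)`: each block carries its own
detour `z j — u j (2m) — u j (2m+1) — z (j+1)` around the bottleneck edge `z j z (j+1)`. -/
def wallBlock (v : ZVert V G a b c d r) : Option (ℕ × ℕ) :=
  (wallPos v).map fun p => (p.1, p.2 / 2)

def midpointLabel : ZVert V G a b c d r → Option (RemainingEdge G a b c d × Fin (2 * r))
  | Sum.inr (Sum.inl p) => some p
  | _ => none

variable (G a b c d r) in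
/-- The edge of `G` on whose path in `Z` a vertex lies, once the `a`–`b` path runs along `P^j`. -/
def branchTag (j : ℕ) : ZVert V G a b c d r → Option (Sym2 V)
  | Sum.inl _ => none
  | Sum.inr (Sum.inl (e, _)) => some e.val
  | Sum.inr (Sum.inr (Sum.inl (s, _))) => if s.val = j then some s(a, b) else some s(c, d)
  | Sum.inr (Sum.inr (Sum.inr _)) => some s(c, d)

theorem wallPos_wallVertex {j i : ℕ} (hj : j < 2 * r) (hi : i < 4 * r) :
    wallPos (wallVertex G a b c d r j i) = some (j, i) := by
  simp [wallVertex, hj, hi, wallPos]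

theorem wallLevel_wallVertex {j i : ℕ} (hj : j < 2 * r) (hi : i < 4 * r) :
    wallLevel (wallVertex G a b c d r j i) = some j := by
  simp [wallLevel, wallPos_wallVertex hj hi]

theorem wallBlock_wallVertex {j i : ℕ} (hj : j < 2 * r) (hi : i < 4 * r) :
    wallBlock (wallVertex G a b c d r j i) = some (j, i / 2) := by
  simp [wallBlock, wallPos_wallVertex hj hi]

theorem wallPos_bottleneck (t : ℕ) : wallPos (bottleneck G a b c d r t) = none := by
  unfold bottleneck
  split_ifs <;> rfl

theorem wallVertex_inj {j i j' i' : ℕ} (hj : j < 2 * r) (hi : i < 4 * r) (hj' : j' < 2 * r)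
    (hi' : i' < 4 * r) (h : wallVertex G a b c d r j i = wallVertex G a b c d r j' i') :
    j = j' ∧ i = i' := by
  have h' := congrArg wallPos h
  rw [wallPos_wallVertex hj hi, wallPos_wallVertex hj' hi'] at h'
  simpa using h'

theorem wallVertex_ne_inl {j i : ℕ} (hj : j < 2 * r) (hi : i < 4 * r) (v : V) :
    wallVertex G a b c d r j i ≠ Sum.inl v := by
  intro h
  have h' := congrArg wallPos h
  rw [wallPos_wallVertex hj hi] at h'
  cases h'

theorem wallVertex_ne_bottleneck {j i : ℕ} (hj : j < 2 * r) (hi : i < 4 * r) (t : ℕ) :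
    wallVertex G a b c d r j i ≠ bottleneck G a b c d r t := by
  intro h
  simpa [wallPos_wallVertex hj hi, wallPos_bottleneck] using congrArg wallPos h

theorem bottleneck_zero : bottleneck G a b c d r 0 = Sum.inl c := rfl

theorem bottleneck_of_lt {t : ℕ} (h0 : 0 < t) (ht : t < 2 * r) :
    bottleneck G a b c d r t = Sum.inr (Sum.inr (Sum.inr ⟨t - 1, by omega⟩)) := by
  simp [bottleneck, h0.ne', ht]

theorem bottleneck_of_le (hr : 1 ≤ r) {t : ℕ} (ht : 2 * r ≤ t) :
    bottleneck G a b c d r t = Sum.inl d := by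
  simp [bottleneck, show t ≠ 0 by omega, show ¬t < 2 * r by omega]

theorem bottleneck_inj (hcd : c ≠ d) {s t : ℕ} (hs : s ≤ 2 * r) (ht : t ≤ 2 * r)
    (h : bottleneck G a b c d r s = bottleneck G a b c d r t) : s = t := by
  unfold bottleneck at h
  split_ifs at h <;> simp only [Sum.inl.injEq, Sum.inr.injEq, Fin.ext_iff] at h <;>
    first | omega | exact absurd h hcd | exact absurd h.symm hcd

theorem branchTag_of_wallLevel {j s : ℕ} {v : ZVert V G a b c d r} (hv : wallLevel v = some s) :
    branchTag G a b c d r j v = if s = j then some s(a, b) else some s(c, d) := by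
  rcases v with v | ⟨e, k⟩ | ⟨s', i⟩ | t <;> simp_all [wallLevel, wallPos, branchTag]

theorem branchTag_bottleneck {j t : ℕ} (ht : 0 < t) (ht' : t < 2 * r) :
    branchTag G a b c d r j (bottleneck G a b c d r t) = some s(c, d) := by
  simp [bottleneck, ht.ne', ht', branchTag]

theorem adj_of_zRel {x y : ZVert V G a b c d r} (hne : x ≠ y) (h : ZRel V G a b c d r x y) :
    (ZGraph V G a b c d r).Adj x y :=
  (SimpleGraph.fromRel_adj _ x y).mpr ⟨hne, Or.inl h⟩

theorem adj_inl_wallVertex_zero (hr : 1 ≤ r) {j : ℕ} (hj : j < 2 * r) :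
    (ZGraph V G a b c d r).Adj (Sum.inl a) (wallVertex G a b c d r j 0) := by
  rw [wallVertex, dif_pos ⟨hj, by omega⟩]
  exact adj_of_zRel (by simp) (Or.inl ⟨rfl, rfl⟩)

theorem adj_wallVertex_last_inl (hr : 1 ≤ r) {j : ℕ} (hj : j < 2 * r) :
    (ZGraph V G a b c d r).Adj (wallVertex G a b c d r j (4 * r - 1)) (Sum.inl b) := by
  rw [wallVertex, dif_pos ⟨hj, by omega⟩]
  exact (adj_of_zRel (by simp) (by simp [ZRel])).symm

theorem adj_wallVertex_succ {j i : ℕ} (hj : j < 2 * r) (hi : i + 1 < 4 * r) :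
    (ZGraph V G a b c d r).Adj (wallVertex G a b c d r j i) (wallVertex G a b c d r j (i + 1)) := by
  rw [wallVertex, wallVertex, dif_pos ⟨hj, by omega⟩, dif_pos ⟨hj, hi⟩]
  exact adj_of_zRel (by simp) ⟨rfl, rfl⟩

theorem adj_bottleneck_succ (hr : 1 ≤ r) {t : ℕ} (ht : t < 2 * r) :
    (ZGraph V G a b c d r).Adj (bottleneck G a b c d r t) (bottleneck G a b c d r (t + 1)) := by
  rcases Nat.eq_zero_or_pos t with rfl | h0
  · rw [bottleneck_zero, bottleneck_of_lt (by omega) (by omega)]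
    exact adj_of_zRel (by simp) (by simp [ZRel])
  rcases (show t + 1 ≤ 2 * r by omega).eq_or_lt with hlast | hlt
  · rw [bottleneck_of_lt h0 ht, bottleneck_of_le hr hlast.ge]
    exact (adj_of_zRel (by simp) (by simp [ZRel]; omega)).symm
  · rw [bottleneck_of_lt h0 ht, bottleneck_of_lt (by omega) hlt]
    exact adj_of_zRel (by simp [Fin.ext_iff]; omega) (by simp [ZRel]; omega)

theorem adj_bottleneck_wallVertex {s i : ℕ} (hs : s < 2 * r) (hi : i < 4 * r)
    (heven : i % 2 = 0) :
    (ZGraph V G a b c d r).Adj (bottleneck G a b c d r s) (wallVertex G a b c d r s i) := by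
  rw [wallVertex, dif_pos ⟨hs, hi⟩]
  rcases Nat.eq_zero_or_pos s with rfl | h0
  · rw [bottleneck_zero]
    exact adj_of_zRel (by simp) (by simp [ZRel, heven])
  · rw [bottleneck_of_lt h0 hs]
    exact adj_of_zRel (by simp) (by simp [ZRel, heven]; omega)

theorem adj_wallVertex_bottleneck_succ (hr : 1 ≤ r) {s i : ℕ} (hs : s < 2 * r) (hi : i < 4 * r)
    (hodd : i % 2 = 1) :
    (ZGraph V G a b c d r).Adj (wallVertex G a b c d r s i) (bottleneck G a b c d r (s + 1)) := by
  rw [wallVertex, dif_pos ⟨hs, hi⟩]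
  rcases (show s + 1 ≤ 2 * r by omega).eq_or_lt with hlast | hlt
  · rw [bottleneck_of_le hr hlast.ge]
    exact (adj_of_zRel (by simp) (by simp [ZRel, hodd]; omega)).symm
  · rw [bottleneck_of_lt (by omega) hlt]
    exact (adj_of_zRel (by simp) (by simp [ZRel, hodd])).symm

theorem adj_inl_midpoint {e : RemainingEdge G a b c d} {v : V} (hv : v ∈ e.val)
    (k : Fin (2 * r)) :
    (ZGraph V G a b c d r).Adj (Sum.inl v) (Sum.inr (Sum.inl (e, k))) :=
  adj_of_zRel (by simp) hv

variable (G a b c d r) in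
def rowSeq (j p : ℕ) : ZVert V G a b c d r :=
  if p = 0 then Sum.inl a else if p ≤ 4 * r then wallVertex G a b c d r j (p - 1) else Sum.inl b

variable (G a b c d r) in
theorem rowSeq_cases (j : ℕ) {p : ℕ} (hp : p ≤ 4 * r + 1) :
    (p = 0 ∧ rowSeq G a b c d r j p = Sum.inl a) ∨
    (0 < p ∧ p ≤ 4 * r ∧ rowSeq G a b c d r j p = wallVertex G a b c d r j (p - 1)) ∨
    (p = 4 * r + 1 ∧ rowSeq G a b c d r j p = Sum.inl b) := by
  unfold rowSeq
  split_ifs with h0 h1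
  · exact Or.inl ⟨h0, rfl⟩
  · exact Or.inr (Or.inl ⟨by omega, h1, rfl⟩)
  · exact Or.inr (Or.inr ⟨by omega, rfl⟩)

theorem rowSeq_of_pos {j p : ℕ} (h0 : 0 < p) (hp : p ≤ 4 * r) :
    rowSeq G a b c d r j p = wallVertex G a b c d r j (p - 1) := by
  simp [rowSeq, h0.ne', hp]

theorem rowSeq_last (j : ℕ) : rowSeq G a b c d r j (4 * r + 1) = Sum.inl b := by
  simp [rowSeq]

theorem rowSeq_adj (hr : 1 ≤ r) {j p : ℕ} (hj : j < 2 * r) (hp : p < 4 * r + 1) :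
    (ZGraph V G a b c d r).Adj (rowSeq G a b c d r j p) (rowSeq G a b c d r j (p + 1)) := by
  rcases Nat.eq_zero_or_pos p with rfl | h0
  · rw [zero_add, rowSeq_of_pos one_pos (by omega)]
    exact adj_inl_wallVertex_zero hr hj
  rw [rowSeq_of_pos h0 (by omega)]
  rcases (show p ≤ 4 * r by omega).eq_or_lt with rfl | hlt
  · rw [rowSeq_last]
    exact adj_wallVertex_last_inl hr hj
  · rw [rowSeq_of_pos (by omega) hlt, show p + 1 - 1 = p - 1 + 1 by omega]
    exact adj_wallVertex_succ hj (by omega)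

theorem rowSeq_edge_labelledBy {j p : ℕ} (hj : j < 2 * r) (hp : p < 4 * r + 1) :
    s(rowSeq G a b c d r j p, rowSeq G a b c d r j (p + 1)).LabelledBy wallLevel j := by
  have hlevel : ∀ q ≤ 4 * r + 1, wallLevel (rowSeq G a b c d r j q) = none ∨
      wallLevel (rowSeq G a b c d r j q) = some j := by
    intro q hq
    rcases rowSeq_cases G a b c d r j hq with ⟨_, h⟩ | ⟨_, _, h⟩ | ⟨_, h⟩ <;> rw [h]
    exacts [Or.inl rfl, Or.inr (wallLevel_wallVertex hj (by omega)), Or.inl rfl]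
  rcases Nat.eq_zero_or_pos p with rfl | h0
  · refine Sym2.labelledBy_mk' (hlevel 0 (by omega)) ?_
    rw [zero_add, rowSeq_of_pos one_pos (by omega)]
    exact wallLevel_wallVertex hj (by omega)
  · refine Sym2.labelledBy_mk ?_ (hlevel (p + 1) (by omega))
    rw [rowSeq_of_pos h0 (by omega)]
    exact wallLevel_wallVertex hj (by omega)

theorem rowSeq_inj (hab : a ≠ b) {j : ℕ} (hj : j < 2 * r) {p q : ℕ} (hp : p ≤ 4 * r + 1)
    (hq : q ≤ 4 * r + 1) (h : rowSeq G a b c d r j p = rowSeq G a b c d r j q) : p = q := by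
  rcases rowSeq_cases G a b c d r j hp with ⟨hp0, hv⟩ | ⟨_, _, hv⟩ | ⟨hp1, hv⟩ <;>
    rcases rowSeq_cases G a b c d r j hq with ⟨hq0, hw⟩ | ⟨_, _, hw⟩ | ⟨hq1, hw⟩ <;>
    rw [hv, hw] at h
  · omega
  · exact absurd h.symm (wallVertex_ne_inl hj (by omega) a)
  · exact absurd (Sum.inl.inj h) hab
  · exact absurd h (wallVertex_ne_inl hj (by omega) a)
  · have := wallVertex_inj hj (by omega) hj (by omega) h
    omega
  · exact absurd h (wallVertex_ne_inl hj (by omega) b)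
  · exact absurd (Sum.inl.inj h).symm hab
  · exact absurd h.symm (wallVertex_ne_inl hj (by omega) b)
  · omega

variable (G a b c d r) in
/-- The edges used at level `j`: those of the `a`–`b` path along `P^j`, and `z j z (j+1)`. -/
def linkageKit (j : ℕ) (e : Sym2 (ZVert V G a b c d r)) : Prop :=
  e = bottleneckEdge G a b c d r j ∨ e.LabelledBy wallLevel j

theorem not_bottleneckEdge_labelledBy (t j : ℕ) :
    ¬ (bottleneckEdge G a b c d r t).LabelledBy wallLevel j := by
  rintro ⟨⟨x, hx, hxj⟩, -⟩
  rcases Sym2.mem_iff.mp hx with rfl | rfl <;> simp [wallLevel, wallPos_bottleneck] at hxj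

theorem exists_linkageKit_avoiding (hcd : c ≠ d) (hr : 1 ≤ r)
    {U : Finset (Sym2 (ZVert V G a b c d r))} (hU : U.card ≤ r) :
    ∃ j < 2 * r, ∀ e ∈ U, ¬ linkageKit G a b c d r j e := by
  have hkit : ∀ j ∈ Finset.range (2 * r), ∀ j' ∈ Finset.range (2 * r), ∀ e,
      linkageKit G a b c d r j e → linkageKit G a b c d r j' e → j = j' := by
    simp only [Finset.mem_range]
    rintro j hj j' hj' e (rfl | h) (h' | h')
    · rcases Sym2.eq_iff.mp h' with ⟨h1, -⟩ | ⟨h1, h2⟩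
      · exact bottleneck_inj hcd (by omega) (by omega) h1
      · have := bottleneck_inj hcd (by omega) (by omega) h1
        have := bottleneck_inj hcd (by omega) (by omega) h2
        omega
    · exact absurd h' (not_bottleneckEdge_labelledBy _ _)
    · exact absurd (h' ▸ h) (not_bottleneckEdge_labelledBy _ _)
    · exact h.eq h'
  simpa using Finset.exists_forall_not_of_card_lt hkit (s := Finset.range (2 * r))
    (by simp; omega)

theorem hasTaggedPath_row (hab : a ≠ b) (hr : 1 ≤ r) {j : ℕ} (hj : j < 2 * r)
    {U : Finset (Sym2 (ZVert V G a b c d r))} (hU : ∀ e ∈ U, ¬ linkageKit G a b c d r j e) :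
    ((ZGraph V G a b c d r).deleteEdges ↑U).HasTaggedPath (branchTag G a b c d r j)
      (Sum.inl a) (Sum.inl b) s(a, b) := by
  obtain ⟨p, hp, hsupp⟩ := exists_isPath_of_chain (rowSeq G a b c d r j) (fun _ => none)
    (4 * r + 1) rfl (rowSeq_last j) (fun s hs t ht => rowSeq_inj hab hj hs ht) (fun _ _ => rfl)
    fun s hs =>
      (deleteEdges_adj.mpr ⟨rowSeq_adj hr hj hs,
        fun h => hU _ h (Or.inr (rowSeq_edge_labelledBy hj hs))⟩).hasTaggedPath s
  refine ⟨p, hp, fun v hv => ?_⟩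
  obtain ⟨t, ht, rfl⟩ | ⟨_, _, h⟩ := hsupp v hv
  · rcases rowSeq_cases G a b c d r j ht with ⟨_, h⟩ | ⟨_, _, h⟩ | ⟨_, h⟩ <;> rw [h]
    · exact Or.inl rfl
    · exact Or.inr (Or.inr (by
        rw [branchTag_of_wallLevel (wallLevel_wallVertex hj (i := t - 1) (by omega)), if_pos rfl]))
    · exact Or.inr (Or.inl rfl)
  · cases h

theorem exists_block_avoiding (hr : 1 ≤ r) {U : Finset (Sym2 (ZVert V G a b c d r))}
    (hU : U.card ≤ r) (s : ℕ) :
    ∃ m < 2 * r, ∀ e ∈ U, ¬ e.LabelledBy wallBlock (s, m) := by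
  simpa using Finset.exists_forall_not_of_card_lt (s := Finset.range (2 * r))
    (K := fun m (e : Sym2 (ZVert V G a b c d r)) => e.LabelledBy wallBlock (s, m))
    (fun _ _ _ _ _ h h' => (Prod.ext_iff.mp (h.eq h')).2) (by simp; omega)

theorem hasTaggedPath_detour (hr : 1 ≤ r) {s m : ℕ} (hs : s < 2 * r) (hm : m < 2 * r)
    {U : Finset (Sym2 (ZVert V G a b c d r))} (hU : ∀ e ∈ U, ¬ e.LabelledBy wallBlock (s, m)) :
    ((ZGraph V G a b c d r).deleteEdges ↑U).HasTaggedPath wallLevel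
      (bottleneck G a b c d r s) (bottleneck G a b c d r (s + 1)) s := by
  have hu : wallBlock (wallVertex G a b c d r s (2 * m)) = some (s, m) := by
    rw [wallBlock_wallVertex hs (by omega)]; simp
  have hu' : wallBlock (wallVertex G a b c d r s (2 * m + 1)) = some (s, m) := by
    rw [wallBlock_wallVertex hs (by omega)]; simp [Nat.add_div_of_dvd_right]
  have hi : 2 * m < 4 * r := by omega
  have hi' : 2 * m + 1 < 4 * r := by omega
  have hz : ∀ t, wallBlock (bottleneck G a b c d r t) = none := fun t => by
    simp [wallBlock, wallPos_bottleneck]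
  have h1 := deleteEdges_adj.mpr ⟨adj_bottleneck_wallVertex hs (by omega) (by omega),
    fun h => hU _ h (Sym2.labelledBy_mk' (Or.inl (hz s)) hu)⟩
  have h2 := deleteEdges_adj.mpr ⟨adj_wallVertex_succ hs (by omega),
    fun h => hU _ h (Sym2.labelledBy_mk hu (Or.inr hu'))⟩
  have h3 := deleteEdges_adj.mpr ⟨adj_wallVertex_bottleneck_succ hr hs (by omega) (by omega),
    fun h => hU _ h (Sym2.labelledBy_mk hu' (Or.inl (hz (s + 1))))⟩
  refine ⟨.cons h1 (.cons h2 (.cons h3 .nil)), ?_, ?_⟩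
  · simp [Walk.isPath_def, (adj_bottleneck_succ hr hs).ne,
      (wallVertex_ne_bottleneck hs hi _).symm, (wallVertex_ne_bottleneck hs hi' _).symm, h2.ne,
      wallVertex_ne_bottleneck hs hi, wallVertex_ne_bottleneck hs hi']
  · simp [wallLevel_wallVertex hs hi, wallLevel_wallVertex hs hi']

theorem hasTaggedPath_column (hcd : c ≠ d) (hr : 1 ≤ r) {j : ℕ} (hj : j < 2 * r)
    {U : Finset (Sym2 (ZVert V G a b c d r))} (hjU : bottleneckEdge G a b c d r j ∉ U)
    (hblock : ∀ s < 2 * r, ∃ m < 2 * r, ∀ e ∈ U, ¬ e.LabelledBy wallBlock (s, m)) :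
    ((ZGraph V G a b c d r).deleteEdges ↑U).HasTaggedPath (branchTag G a b c d r j)
      (Sum.inl c) (Sum.inl d) s(c, d) := by
  -- level `j` is crossed by the bottleneck edge, every other level by a detour through its row
  obtain ⟨p, hp, hsupp⟩ := exists_isPath_of_chain (bottleneck G a b c d r)
    (fun v => if wallLevel v = some j then none else wallLevel v) (2 * r) bottleneck_zero
    (bottleneck_of_le hr le_rfl) (fun s hs t ht => bottleneck_inj hcd hs ht)
    (fun t _ => by simp [wallLevel, wallPos_bottleneck]) fun s hs => by
      by_cases hsj : s = j
      · subst hsj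
        exact (deleteEdges_adj.mpr ⟨adj_bottleneck_succ hr hs, hjU⟩).hasTaggedPath s
      · obtain ⟨m, hm, hmU⟩ := hblock s hs
        exact (hasTaggedPath_detour hr hs hm hmU).mono fun w hw => by simp [hw, hsj]
  refine ⟨p, hp, fun v hv => ?_⟩
  obtain ⟨t, ht, rfl⟩ | ⟨s, _, hv⟩ := hsupp v hv
  · rcases Nat.eq_zero_or_pos t with rfl | h0
    · exact Or.inl rfl
    rcases ht.eq_or_lt with rfl | hlt
    · exact Or.inr (Or.inl (bottleneck_of_le hr le_rfl))
    · exact Or.inr (Or.inr (branchTag_bottleneck h0 hlt))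
  · split_ifs at hv with hvj
    rw [branchTag_of_wallLevel hv, if_neg fun hsj : s = j => hvj (hsj ▸ hv)]
    exact Or.inr (Or.inr rfl)

theorem hasTaggedPath_midpoint (hr : 1 ≤ r) {U : Finset (Sym2 (ZVert V G a b c d r))}
    (hU : U.card ≤ r) (j : ℕ) (e : RemainingEdge G a b c d) {x y : V} (hxy : s(x, y) = e.val)
    (hne : x ≠ y) :
    ((ZGraph V G a b c d r).deleteEdges ↑U).HasTaggedPath (branchTag G a b c d r j)
      (Sum.inl x) (Sum.inl y) s(x, y) := by
  have hcard : U.card < (Finset.univ.map ⟨Prod.mk e, Prod.mk_right_injective e⟩ :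
      Finset (RemainingEdge G a b c d × Fin (2 * r))).card := by
    simp only [Finset.card_map, Finset.card_univ, Fintype.card_fin]
    omega
  obtain ⟨⟨e', k⟩, hk, hkU⟩ := Finset.exists_forall_not_of_card_lt
    (K := fun i (f : Sym2 (ZVert V G a b c d r)) => f.LabelledBy midpointLabel i)
    (fun _ _ _ _ _ h h' => h.eq h') hcard
  obtain rfl : e = e' := by simpa using hk
  have hadj : ∀ v ∈ e.val, ((ZGraph V G a b c d r).deleteEdges ↑U).Adj
      (Sum.inl v) (Sum.inr (Sum.inl (e, k))) := fun v hv =>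
    deleteEdges_adj.mpr ⟨adj_inl_midpoint hv k,
      fun h => hkU _ h (Sym2.labelledBy_mk' (Or.inl rfl) rfl)⟩
  refine ⟨.cons (hadj x (hxy ▸ Sym2.mem_mk_left x y))
    (.cons (hadj y (hxy ▸ Sym2.mem_mk_right x y)).symm .nil), ?_, ?_⟩
  · simp [Walk.isPath_def, hne]
  · simp [branchTag, hxy]

end ZGraph

theorem Z_minus_small_edge_set_contains_subdivision_general
    (V : Type) (G : SimpleGraph V)
    (a b c d : V) (hab : G.Adj a b) (hcd : G.Adj c d)
    (r : ℕ) (hr : 1 ≤ r)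
    (U : Finset (Sym2 (ZVert V G a b c d r))) (hU : U.card ≤ r) :
    Nonempty (SubdivisionIn G ((ZGraph V G a b c d r).deleteEdges ↑U)) := by
  obtain ⟨j, hj, hjU⟩ := ZGraph.exists_linkageKit_avoiding hcd.ne hr hU
  refine SubdivisionIn.nonempty_of_hasTaggedPath ⟨Sum.inl, Sum.inl_injective⟩
    (ZGraph.branchTag G a b c d r j) (fun _ => rfl) fun x y hxy => ?_
  by_cases hxab : s(x, y) = s(a, b)
  · exact (ZGraph.hasTaggedPath_row hab.ne hr hj hjU).of_sym2_eq hxab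
  by_cases hxcd : s(x, y) = s(c, d)
  · exact (ZGraph.hasTaggedPath_column hcd.ne hr hj (fun h => hjU _ h (Or.inl rfl))
      fun s _ => ZGraph.exists_block_avoiding hr hU s).of_sym2_eq hxcd
  · exact ZGraph.hasTaggedPath_midpoint hr hU j ⟨s(x, y), hxy, hxab, hxcd⟩ rfl hxy.ne

/-- Lemma 2 of the paper (no small edge hitting set): for every edge set `U` of
`Z` with `|U| ≤ r`, the graph `Z − U` contains a subdivision of `G`. -/
theorem Z_minus_small_edge_set_contains_subdivision
    (V : Type) [Fintype V] [DecidableEq V] (G : SimpleGraph V)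
    (a b c d : V) (hab : G.Adj a b) (hcd : G.Adj c d)
    (hdist : [a, b, c, d].Pairwise (· ≠ ·))
    (r : ℕ) (hr : 1 ≤ r)
    (U : Finset (Sym2 (ZVert V G a b c d r))) (hU : U.card ≤ r) :
    Nonempty (SubdivisionIn G ((ZGraph V G a b c d r).deleteEdges ↑U)) :=
  Z_minus_small_edge_set_contains_subdivision_general V G a b c d hab hcd r hr U hU
end
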